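/- arXiv:1704.03122 — 6 statements merged into one kernel-verified Lean document; each statement's English description precedes it below -/
import Mathlib

section
/- Let n ≥ 6 be an integer and let G be a connected simple graph on n vertices such that the multiplicity of the largest distance Laplacian eigenvalue ∂L_1 of G equals n−3. Then ∂L_1 is an integer. -/
open Matrix

/-- The distance Laplacian matrix of a graph: diagonal entries are the transmissions
`Tr(v) = ∑ u, d(v,u)`, off-diagonal entries are `-d(u,v)`. -/
noncomputable def distLaplacian {V : Type*} [Fintype V] [DecidableEq V]
    (G : SimpleGraph V) : Matrix V V ℝ :=
  Matrix.of fun i j => if i = j then ∑ k : V, (G.dist i k : ℝ) else -(G.dist i j : ℝ)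

/-- The multiplicity of `μ` as an eigenvalue of `M`, i.e. the dimension of the
corresponding eigenspace. -/
noncomputable def eigMult {V : Type*} [Fintype V] (M : Matrix V V ℝ) (μ : ℝ) : ℕ :=
  Module.finrank ℝ (Module.End.eigenspace M.mulVecLin μ)

/-- The largest eigenvalue of a matrix. -/
noncomputable def lambdaMax {V : Type*} [Fintype V] (M : Matrix V V ℝ) : ℝ :=
  sSup {μ : ℝ | Module.End.HasEigenvalue M.mulVecLin μ}

/-- The transmission of a vertex. -/
noncomputable def transmission {V : Type*} [Fintype V] (G : SimpleGraph V) (v : V) : ℕ :=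
  ∑ u : V, G.dist v u

/-!
The entries of `D^L(G)` are integers and its rows sum to zero, so its characteristic polynomial
`p` is a monic integer polynomial of degree `n` divisible by `X`, and `∂L₁` is an algebraic
integer. The geometric multiplicity `n - 3` of `∂L₁` bounds its multiplicity `k` as a root of `p`.
Were `∂L₁` irrational, its minimal polynomial over `ℚ` would have degree at least `2`, be coprime
to `X`, and divide `p` to the power `k` (it is separable, so each factor accounts for one root
`∂L₁`), whence `1 + 2 (n - 3) ≤ n`, impossible for `n ≥ 6`. A rational algebraic integer is an
integer.
-/

open Polynomial

section MinpolyMultiplicity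

variable {F K : Type*} [Field F] [Field K] [Algebra F K] {x : K}

theorem rootMultiplicity_map_minpoly (hx : IsSeparable F x) :
    ((minpoly F x).map (algebraMap F K)).rootMultiplicity x = 1 := by
  have hroot : ((minpoly F x).map (algebraMap F K)).IsRoot x := by
    rw [IsRoot, eval_map, ← aeval_def, minpoly.aeval]
  have hpos := (rootMultiplicity_pos ((minpoly.monic hx.isIntegral).map _).ne_zero).mpr hroot
  have hle := rootMultiplicity_le_one_of_separable (Separable.map hx (f := algebraMap F K)) x
  omega

theorem minpoly_pow_dvd_of_le_rootMultiplicity (hx : IsSeparable F x) {p : F[X]} (hp : p ≠ 0)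
    {k : ℕ} (hk : k ≤ (p.map (algebraMap F K)).rootMultiplicity x) : minpoly F x ^ k ∣ p := by
  induction k generalizing p with
  | zero => simp
  | succ k ih =>
    have hp' : p.map (algebraMap F K) ≠ 0 := Polynomial.map_ne_zero hp
    have hroot : aeval x p = 0 := by
      rw [aeval_def, ← eval_map, ← IsRoot.def, ← rootMultiplicity_pos hp']
      omega
    obtain ⟨r, rfl⟩ := minpoly.dvd F x hroot
    rw [Polynomial.map_mul] at hk hp'
    rw [rootMultiplicity_mul hp', rootMultiplicity_map_minpoly hx] at hk
    rw [pow_succ']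
    exact mul_dvd_mul_left _ (ih (right_ne_zero_of_mul hp) (by omega))

theorem mem_range_algebraMap_of_natDegree_le_two_mul_rootMultiplicity (hx : IsSeparable F x)
    {p : F[X]} (hp : p ≠ 0) (hX : X ∣ p)
    (hdeg : p.natDegree ≤ 2 * (p.map (algebraMap F K)).rootMultiplicity x) :
    x ∈ (algebraMap F K).range := by
  set k := (p.map (algebraMap F K)).rootMultiplicity x
  have hint : IsIntegral F x := hx.isIntegral
  rw [← minpoly.natDegree_eq_one_iff]
  by_contra hne
  have htwo : 2 ≤ (minpoly F x).natDegree := by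
    have := minpoly.natDegree_pos hint
    omega
  have hXndvd : ¬ X ∣ minpoly F x := fun hdvd => by
    have := natDegree_le_of_dvd (irreducible_X.dvd_symm (minpoly.irreducible hint) hdvd) X_ne_zero
    rw [natDegree_X] at this
    omega
  have hcop : IsCoprime X (minpoly F x ^ k) :=
    (irreducible_X.coprime_iff_not_dvd.mpr hXndvd).pow_right
  have hle := natDegree_le_of_dvd
    (hcop.mul_dvd hX (minpoly_pow_dvd_of_le_rootMultiplicity hx hp le_rfl)) hp
  rw [natDegree_mul X_ne_zero (pow_ne_zero _ (minpoly.ne_zero hint)), natDegree_X,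
    natDegree_pow] at hle
  nlinarith

end MinpolyMultiplicity

theorem exists_int_eq_of_isIntegral_of_mem_range {K : Type*} [Field K] [CharZero K] {x : K}
    (hx : IsIntegral ℤ x) (hxq : x ∈ (algebraMap ℚ K).range) : ∃ z : ℤ, x = z := by
  obtain ⟨q, rfl⟩ := hxq
  obtain ⟨z, rfl⟩ := IsIntegrallyClosed.isIntegral_iff.mp
    ((isIntegral_algebraMap_iff (algebraMap ℚ K).injective).mp hx)
  exact ⟨z, by simp⟩

theorem Matrix.X_dvd_charpoly_of_det_eq_zero {V R : Type*} [Fintype V] [DecidableEq V]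
    [CommRing R] {M : Matrix V V R} (hM : M.det = 0) : X ∣ M.charpoly := by
  rw [X_dvd_iff, ← (isUnit_neg_one.pow (Fintype.card V)).mul_right_eq_zero,
    ← M.det_eq_sign_charpoly_coeff, hM]

theorem Matrix.exists_int_eq_of_card_le_two_mul_finrank_eigenspace {V K : Type*} [Fintype V]
    [DecidableEq V] [Field K] [CharZero K] {M : Matrix V V ℤ} (hM : M.det = 0) {μ : K}
    (hμ : Fintype.card V ≤
      2 * Module.finrank K (Module.End.eigenspace (M.map (Int.castRingHom K)).mulVecLin μ)) :
    ∃ z : ℤ, μ = z := by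
  set p : ℚ[X] := M.charpoly.map (Int.castRingHom ℚ)
  have hp0 : p ≠ 0 := (M.charpoly_monic.map _).ne_zero
  have hcomp : (algebraMap ℚ K).comp (Int.castRingHom ℚ) = algebraMap ℤ K := RingHom.ext_int _ _
  have hgeom : Module.finrank K (Module.End.eigenspace (M.map (Int.castRingHom K)).mulVecLin μ) ≤
      (p.map (algebraMap ℚ K)).rootMultiplicity μ := by
    rw [Polynomial.map_map, hcomp, algebraMap_int_eq, ← Matrix.charpoly_map,
      ← Matrix.charpoly_mulVecLin]
    exact LinearMap.finrank_eigenspace_le _ μ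
  have hcard : 0 < Fintype.card V :=
    Fintype.card_pos_iff.mpr <| not_isEmpty_iff.mp fun _ => by simp at hM
  have hint : IsIntegral ℤ μ := by
    refine ⟨M.charpoly, M.charpoly_monic, ?_⟩
    rw [← eval_map, ← hcomp, ← Polynomial.map_map, ← IsRoot.def,
      ← rootMultiplicity_pos (Polynomial.map_ne_zero hp0)]
    omega
  have hX : X ∣ p := by
    simpa using Polynomial.map_dvd (Int.castRingHom ℚ) (Matrix.X_dvd_charpoly_of_det_eq_zero hM)
  refine exists_int_eq_of_isIntegral_of_mem_range hint
    (mem_range_algebraMap_of_natDegree_le_two_mul_rootMultiplicity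
      (minpoly.irreducible hint.tower_top).separable hp0 hX ?_)
  rw [M.charpoly_monic.natDegree_map, M.charpoly_natDegree_eq_dim]
  omega

namespace SimpleGraph

variable {V : Type*} [Fintype V] [DecidableEq V] (G : SimpleGraph V)

noncomputable def intDistLaplacian : Matrix V V ℤ :=
  Matrix.of fun i j => if i = j then ∑ k : V, (G.dist i k : ℤ) else -(G.dist i j : ℤ)

theorem distLaplacian_eq_map_intDistLaplacian :
    distLaplacian G = G.intDistLaplacian.map (Int.castRingHom ℝ) := by
  ext i j
  by_cases h : i = j <;> simp [distLaplacian, intDistLaplacian, h]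

theorem intDistLaplacian_apply (i j : V) : G.intDistLaplacian i j =
    (if i = j then ∑ k : V, (G.dist i k : ℤ) else 0) - G.dist i j := by
  by_cases h : i = j <;> simp [intDistLaplacian, h]

theorem intDistLaplacian_mulVec_one : G.intDistLaplacian *ᵥ 1 = 0 := by
  ext i
  simp [mulVec, dotProduct, intDistLaplacian_apply, Finset.sum_sub_distrib]

theorem det_intDistLaplacian [Nonempty V] : G.intDistLaplacian.det = 0 :=
  Matrix.exists_mulVec_eq_zero_iff.mp ⟨1, one_ne_zero, G.intDistLaplacian_mulVec_one⟩

end SimpleGraph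

theorem largest_distLaplacian_eigenvalue_integral_general
    (n : ℕ) (hn : 6 ≤ n) (G : SimpleGraph (Fin n))
    (hmult : eigMult (distLaplacian G) (lambdaMax (distLaplacian G)) = n - 3) :
    ∃ z : ℤ, lambdaMax (distLaplacian G) = (z : ℝ) := by
  have : Nonempty (Fin n) := ⟨⟨0, by omega⟩⟩
  rw [eigMult, G.distLaplacian_eq_map_intDistLaplacian] at hmult
  rw [G.distLaplacian_eq_map_intDistLaplacian]
  refine Matrix.exists_int_eq_of_card_le_two_mul_finrank_eigenspace G.det_intDistLaplacian ?_
  rw [hmult, Fintype.card_fin]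
  omega

/-- If `G` is a connected graph on `n ≥ 6` vertices whose largest distance
Laplacian eigenvalue `∂ᴸ₁` has multiplicity `n - 3`, then `∂ᴸ₁` is an integer. -/
theorem largest_distLaplacian_eigenvalue_integral
    (n : ℕ) (hn : 6 ≤ n) (G : SimpleGraph (Fin n)) (hG : G.Connected)
    (hmult : eigMult (distLaplacian G) (lambdaMax (distLaplacian G)) = n - 3) :
    ∃ z : ℤ, lambdaMax (distLaplacian G) = (z : ℝ) :=
  largest_distLaplacian_eigenvalue_integral_general n hn G hmult
end

section
/- Let n ≥ 5 and let G be a connected simple graph on n vertices such that the multiplicity of the largest distance Laplacian eigenvalue ∂L_1 of G equals n−3. Let M be any 5×5 principal submatrix of the distance Laplacian matrix D^L(G). Then ∂L_1 is an eigenvalue of M with multiplicity at least two; moreover, for each index k ∈ {1,2,3,4,5} there exists a nonzero eigenvector z = (z_1,…,z_5) of M for the eigenvalue ∂L_1 such that z_k = 0 and z_1+z_2+z_3+z_4+z_5 = 0. -/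
/-!
Vectors supported on the five chosen vertices form a 5-dimensional subspace of `ℝⁿ`, and the
`∂L₁`-eigenspace of `D^L(G)` has dimension `n - 3`, so they meet in dimension at least `2`. The
restriction of such a vector to the five vertices is a `∂L₁`-eigenvector of `M`. It sums to zero
because it is orthogonal to the all-ones vector, which spans the kernel of `D^L(G)` for connected
`G`; in particular `∂L₁ ≠ 0`, as `n - 3 ≥ 2`. Imposing `z k = 0` costs at most one more dimension.
-/

open Matrix

open Module

section LinearAlgebra

variable {K V W : Type*} [DivisionRing K] [AddCommGroup V] [Module K V] [AddCommGroup W]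
  [Module K W] [FiniteDimensional K V] [FiniteDimensional K W]

theorem finrank_add_finrank_le_finrank_comap_add (E : V →ₗ[K] W) (U : Submodule K W) :
    finrank K V + finrank K U ≤ finrank K (U.comap E) + finrank K W := by
  have hker : U.comap E = LinearMap.ker (U.mkQ ∘ₗ E) := by
    rw [LinearMap.ker_comp, Submodule.ker_mkQ]
  have h₁ := (U.mkQ ∘ₗ E).finrank_range_add_finrank_ker
  have h₂ := (LinearMap.range (U.mkQ ∘ₗ E)).finrank_le
  have h₃ := U.finrank_quotient_add_finrank
  rw [← hker] at h₁
  omega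

theorem Submodule.exists_ne_zero_apply_eq_zero_of_one_lt_finrank {U : Submodule K V}
    (hU : 1 < finrank K U) (φ : V →ₗ[K] K) : ∃ v ∈ U, v ≠ 0 ∧ φ v = 0 := by
  have h := finrank_add_finrank_le_finrank_comap_add (φ ∘ₗ U.subtype) ⊥
  rw [Submodule.comap_bot, finrank_bot, finrank_self] at h
  have hpos : 0 < finrank K (LinearMap.ker (φ ∘ₗ U.subtype)) := by omega
  obtain ⟨⟨w, hw⟩, hw0⟩ := finrank_pos_iff_exists_ne_zero.1 hpos
  exact ⟨w, w.2, fun hw' => hw0 (Subtype.ext (Subtype.ext hw')), hw⟩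

end LinearAlgebra

section Submatrix

variable {ι κ R : Type*} [Fintype ι] [Fintype κ]

theorem sum_extend_zero [AddCommMonoid R] {f : ι → κ} (hf : f.Injective) (z : ι → R) :
    ∑ m, Function.extend f z 0 m = ∑ i, z i := by
  refine (Fintype.sum_of_injective f hf _ _ (fun m hm => ?_) (fun i => ?_)).symm
  · rw [Function.extend_apply' _ _ _ (by simpa using hm), Pi.zero_apply]
  · rw [hf.extend_apply]

theorem dotProduct_extend_zero [NonUnitalNonAssocSemiring R] {f : ι → κ} (hf : f.Injective)
    (z : ι → R) (v : κ → R) : Function.extend f z 0 ⬝ᵥ v = z ⬝ᵥ (v ∘ f) := by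
  refine (Fintype.sum_of_injective f hf _ _ (fun m hm => ?_) (fun i => ?_)).symm
  · rw [Function.extend_apply' _ _ _ (by simpa using hm), Pi.zero_apply, zero_mul]
  · rw [hf.extend_apply, Function.comp_apply]

theorem submatrix_mulVec_of_injective [CommSemiring R] (A : Matrix κ κ R) {f : ι → κ}
    (hf : f.Injective) (z : ι → R) :
    A.submatrix f f *ᵥ z = (A *ᵥ Function.extend f z 0) ∘ f := by
  ext i
  simp only [mulVec, Function.comp_apply]
  rw [dotProduct_comm _ (Function.extend f z 0), dotProduct_extend_zero hf, dotProduct_comm]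
  rfl

theorem submatrix_mulVec_eq_smul_of_mulVec_extend_eq_smul [CommSemiring R] {A : Matrix κ κ R}
    {f : ι → κ} (hf : f.Injective) {z : ι → R} {μ : R}
    (h : A *ᵥ Function.extend f z 0 = μ • Function.extend f z 0) :
    A.submatrix f f *ᵥ z = μ • z := by
  rw [submatrix_mulVec_of_injective A hf, h]
  ext i
  simp [hf.extend_apply]

theorem Matrix.IsSymm.dotProduct_eq_zero_of_mulVec_eq_smul [Field R] {A : Matrix ι ι R}
    (hA : A.IsSymm) {x y : ι → R} {μ ν : R} (hx : A *ᵥ x = μ • x) (hy : A *ᵥ y = ν • y)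
    (hμν : μ ≠ ν) : x ⬝ᵥ y = 0 := by
  have h : μ * (x ⬝ᵥ y) = ν * (x ⬝ᵥ y) :=
    calc μ * (x ⬝ᵥ y) = y ⬝ᵥ (A *ᵥ x) := by rw [hx, dotProduct_smul, dotProduct_comm, smul_eq_mul]
      _ = (A *ᵥ y) ⬝ᵥ x := by rw [dotProduct_mulVec, ← vecMul_transpose, hA.eq]
      _ = ν * (x ⬝ᵥ y) := by rw [hy, smul_dotProduct, dotProduct_comm, smul_eq_mul]
  by_contra hxy
  exact hμν (mul_right_cancel₀ hxy h)

end Submatrix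

section DistLaplacian

variable {V : Type*} [Fintype V] [DecidableEq V]

theorem distLaplacian_isSymm (G : SimpleGraph V) : (distLaplacian G).IsSymm := by
  ext i j
  by_cases h : i = j
  · subst h; rfl
  · simp [distLaplacian, h, Ne.symm h, SimpleGraph.dist_comm]

theorem distLaplacian_mulVec_apply (G : SimpleGraph V) (x : V → ℝ) (i : V) :
    (distLaplacian G *ᵥ x) i = ∑ k, (G.dist i k : ℝ) * (x i - x k) := by
  have hrow : ∀ k, distLaplacian G i k =
      (if i = k then ∑ l, (G.dist i l : ℝ) else 0) - G.dist i k := by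
    intro k
    by_cases h : i = k
    · subst h; simp [distLaplacian]
    · simp [distLaplacian, h]
  simp only [mulVec, dotProduct, hrow, sub_mul, Finset.sum_sub_distrib, ite_mul, zero_mul,
    Finset.sum_ite_eq, Finset.mem_univ, if_true, mul_sub, Finset.sum_mul]

theorem distLaplacian_mulVec_const (G : SimpleGraph V) (c : ℝ) :
    distLaplacian G *ᵥ (fun _ => c) = 0 := by
  ext i
  simp [distLaplacian_mulVec_apply]

theorem SimpleGraph.Connected.ker_distLaplacian_le_span_one {G : SimpleGraph V}
    (hG : G.Connected) :
    LinearMap.ker (distLaplacian G).mulVecLin ≤ Submodule.span ℝ {fun _ => 1} := by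
  intro x hx
  have := hG.nonempty
  obtain ⟨i₀, hmax⟩ := Finite.exists_max x
  have hterms : ∀ k, (G.dist i₀ k : ℝ) * (x i₀ - x k) = 0 := by
    have hsum : ∑ k, (G.dist i₀ k : ℝ) * (x i₀ - x k) = 0 := by
      rw [← distLaplacian_mulVec_apply]
      exact congrFun hx i₀
    exact congrFun ((Fintype.sum_eq_zero_iff_of_nonneg
      fun k => mul_nonneg (Nat.cast_nonneg _) (sub_nonneg.2 (hmax k))).1 hsum)
  refine Submodule.mem_span_singleton.2 ⟨x i₀, funext fun k => ?_⟩
  obtain rfl | hk := eq_or_ne i₀ k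
  · simp
  · have hd : (G.dist i₀ k : ℝ) ≠ 0 := by exact_mod_cast (hG.pos_dist_of_ne hk).ne'
    have := (mul_eq_zero.1 (hterms k)).resolve_left hd
    simp only [Pi.smul_apply, smul_eq_mul, mul_one]
    linarith

theorem SimpleGraph.Connected.eigMult_distLaplacian_zero_le_one {G : SimpleGraph V}
    (hG : G.Connected) : eigMult (distLaplacian G) 0 ≤ 1 := by
  rw [eigMult, Module.End.eigenspace_zero]
  exact (Submodule.finrank_mono hG.ker_distLaplacian_le_span_one).trans
    ((finrank_span_le_card _).trans (by simp))

theorem sum_eq_zero_of_distLaplacian_mulVec_eq_smul {G : SimpleGraph V} {x : V → ℝ} {μ : ℝ}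
    (hμ : μ ≠ 0) (hx : distLaplacian G *ᵥ x = μ • x) : ∑ i, x i = 0 := by
  have h1 : distLaplacian G *ᵥ (fun _ => 1) = (0 : ℝ) • fun _ => 1 := by
    rw [distLaplacian_mulVec_const, zero_smul]
  simpa [dotProduct] using (distLaplacian_isSymm G).dotProduct_eq_zero_of_mulVec_eq_smul hx h1 hμ

end DistLaplacian

/-- Let `G` be connected on `n ≥ 5` vertices with the multiplicity of the
largest distance Laplacian eigenvalue `∂ᴸ₁` equal to `n - 3`, and let `M` be any `5 × 5`
principal submatrix of `𝒟ᴸ(G)`. Then `∂ᴸ₁` is an eigenvalue of `M` of multiplicity at least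
two, and for each index `k` there is a nonzero eigenvector `z` of `M` for `∂ᴸ₁` with `z k = 0`
and `∑ i, z i = 0`. -/
theorem principal_submatrix_eigenvector
    (n : ℕ) (hn : 5 ≤ n) (G : SimpleGraph (Fin n)) (hG : G.Connected)
    (hmult : eigMult (distLaplacian G) (lambdaMax (distLaplacian G)) = n - 3)
    (f : Fin 5 → Fin n) (hf : Function.Injective f)
    (M : Matrix (Fin 5) (Fin 5) ℝ) (hM : M = (distLaplacian G).submatrix f f) :
    2 ≤ eigMult M (lambdaMax (distLaplacian G)) ∧
      ∀ k : Fin 5, ∃ z : Fin 5 → ℝ, z ≠ 0 ∧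
        M.mulVec z = lambdaMax (distLaplacian G) • z ∧ z k = 0 ∧ ∑ i, z i = 0 := by
  set D := distLaplacian G
  set l := lambdaMax D
  have hl : l ≠ 0 := by
    intro hl0
    have := hG.eigMult_distLaplacian_zero_le_one
    rw [← hl0, hmult] at this
    omega
  set W := (Module.End.eigenspace D.mulVecLin l).comap (Function.ExtendByZero.linearMap ℝ f)
  have hW : ∀ z ∈ W, M *ᵥ z = l • z ∧ ∑ i, z i = 0 := fun z hz =>
    have hz : D *ᵥ Function.extend f z 0 = l • Function.extend f z 0 :=
      Module.End.mem_eigenspace_iff.1 hz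
    ⟨hM ▸ submatrix_mulVec_eq_smul_of_mulVec_extend_eq_smul hf hz,
      sum_extend_zero hf z ▸ sum_eq_zero_of_distLaplacian_mulVec_eq_smul hl hz⟩
  have hdimW : 2 ≤ finrank ℝ W := by
    have := finrank_add_finrank_le_finrank_comap_add (Function.ExtendByZero.linearMap ℝ f)
      (Module.End.eigenspace D.mulVecLin l)
    rw [finrank_fin_fun, finrank_fin_fun] at this
    change 5 + eigMult D l ≤ finrank ℝ W + n at this
    omega
  refine ⟨hdimW.trans (Submodule.finrank_mono fun z hz =>
    Module.End.mem_eigenspace_iff.2 (hW z hz).1), fun k => ?_⟩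
  obtain ⟨z, hz, hz0, hzk⟩ :=
    Submodule.exists_ne_zero_apply_eq_zero_of_one_lt_finrank hdimW (LinearMap.proj k)
  exact ⟨z, hz0, (hW z hz).1, hzk, (hW z hz).2⟩
end

section
/- Let G be a connected P_5-free simple graph on n ≥ 5 vertices with diameter 3. Then G contains, as an induced subgraph, at least one of the following five graphs I_1,…,I_5 on vertex set {v_1,v_2,v_3,v_4,u}: each I_i contains the induced path v_1v_2v_3v_4, and the neighborhood of u within {v_1,v_2,v_3,v_4} is {v_2} in I_1, {v_1,v_2} in I_2, {v_1,v_3} in I_3, {v_2,v_3} in I_4, and {v_1,v_2,v_3} in I_5. -/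
/-- The path `v₁v₂v₃v₄` on the vertices `0, 1, 2, 3` of `Fin 5`. -/
def pathEdges : Set (Sym2 (Fin 5)) := {s(0, 1), s(1, 2), s(2, 3)}

/-- `I₁`: the path `v₁v₂v₃v₄` plus a fifth vertex `u` adjacent exactly to `v₂`. -/
def Igraph1 : SimpleGraph (Fin 5) := SimpleGraph.fromEdgeSet (pathEdges ∪ {s(4, 1)})

/-- `I₂`: the path `v₁v₂v₃v₄` plus a fifth vertex `u` adjacent exactly to `v₁, v₂`. -/
def Igraph2 : SimpleGraph (Fin 5) := SimpleGraph.fromEdgeSet (pathEdges ∪ {s(4, 0), s(4, 1)})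

/-- `I₃`: the path `v₁v₂v₃v₄` plus a fifth vertex `u` adjacent exactly to `v₁, v₃`. -/
def Igraph3 : SimpleGraph (Fin 5) := SimpleGraph.fromEdgeSet (pathEdges ∪ {s(4, 0), s(4, 2)})

/-- `I₄`: the path `v₁v₂v₃v₄` plus a fifth vertex `u` adjacent exactly to `v₂, v₃`. -/
def Igraph4 : SimpleGraph (Fin 5) := SimpleGraph.fromEdgeSet (pathEdges ∪ {s(4, 1), s(4, 2)})

/-- `I₅`: the path `v₁v₂v₃v₄` plus a fifth vertex `u` adjacent exactly to `v₁, v₂, v₃`. -/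
def Igraph5 : SimpleGraph (Fin 5) :=
  SimpleGraph.fromEdgeSet (pathEdges ∪ {s(4, 0), s(4, 1), s(4, 2)})

/-!
A diametral pair of vertices at distance `3` is joined by a geodesic, which is an induced path
`v₁v₂v₃v₄`. Since `n ≥ 5` and `G` is connected, some vertex `u` off the path has a neighbour on
it, and `u` cannot see both ends, as they are at distance `3`. Up to reversing the path, the
neighbourhood of `u` on the path is then the pattern of one of `I₁, …, I₅`, or `{v₄}`, in which
case `v₁v₂v₃v₄u` is an induced `P₅`.
-/

namespace SimpleGraph

variable {V : Type*} {G : SimpleGraph V}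

theorem pathGraph_comap_castSucc (m : ℕ) :
    (pathGraph (m + 1)).comap Fin.castSucc = pathGraph m := by
  ext i j
  simp [pathGraph_adj]

theorem pathGraph_adj_last_castSucc {m : ℕ} (i : Fin (m + 1)) :
    (pathGraph (m + 2)).Adj (Fin.last (m + 1)) i.castSucc ↔ i = Fin.last m := by
  simp only [pathGraph_adj, Fin.val_last, Fin.val_castSucc, Fin.ext_iff]
  omega

def pathGraphRevIso (m : ℕ) : pathGraph m ≃g pathGraph m where
  toEquiv := Fin.revPerm
  map_rel_iff' := by
    intro i j
    simp only [Fin.revPerm_apply, pathGraph_adj, Fin.val_rev]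
    omega

theorem Walk.not_adj_getVert_of_length_eq_dist {u v : V} {p : G.Walk u v}
    (hp : p.length = G.dist u v) {i j : ℕ} (hij : i + 1 < j) (hj : j ≤ p.length) :
    ¬G.Adj (p.getVert i) (p.getVert j) := fun h => by
  have := dist_le ((p.take i).append (.cons h (p.drop j)))
  simp only [Walk.length_append, Walk.take_length, Walk.length_cons, Walk.drop_length] at this
  omega

theorem Reachable.exists_pathGraph_embedding {u v : V} (hr : G.Reachable u v) {n : ℕ}
    (hn : G.dist u v = n) : ∃ e : pathGraph (n + 1) ↪g G, e 0 = u ∧ e (Fin.last n) = v := by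
  obtain ⟨p, hp⟩ := hr.exists_walk_length_eq_dist
  have hlen : p.length = n := hp.trans hn
  have hinj : Function.Injective fun i : Fin (n + 1) => p.getVert i := fun i j hij =>
    Fin.ext <| (p.isPath_of_length_eq_dist hp).getVert_injOn
      (i.is_le.trans_eq hlen.symm) (j.is_le.trans_eq hlen.symm) hij
  refine ⟨⟨⟨_, hinj⟩, fun {i j} => ?_⟩, by simp, by simp [← hlen, Walk.getVert_length]⟩
  simp only [Function.Embedding.coeFn_mk, pathGraph_adj]
  constructor
  · intro h
    by_contra! hne
    rcases lt_trichotomy (i : ℕ) j with hij | hij | hij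
    · exact p.not_adj_getVert_of_length_eq_dist hp (by omega) (by omega) h
    · exact G.loopless.irrefl _ (hij ▸ h)
    · exact p.not_adj_getVert_of_length_eq_dist hp (by omega) (by omega) h.symm
  · rintro (h | h)
    · exact h ▸ p.adj_getVert_succ (by omega)
    · exact (h ▸ p.adj_getVert_succ (by omega)).symm

theorem Connected.exists_adj_of_ncard_lt [Finite V] (hG : G.Connected) {s : Set V}
    (hs : s.Nonempty) (hcard : s.ncard < Nat.card V) : ∃ u ∉ s, ∃ v ∈ s, G.Adj u v := by
  obtain ⟨w, hw⟩ : ∃ w, w ∉ s := by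
    by_contra! h
    simp [Set.eq_univ_of_forall h, Set.ncard_univ] at hcard
  obtain ⟨v, hv⟩ := hs
  obtain ⟨d, -, hd, hd'⟩ := (hG v w).some.exists_boundary_dart s hv hw
  exact ⟨d.snd, hd', d.fst, hd, d.adj.symm⟩

theorem nonempty_embedding_of_comap_castSucc {m : ℕ} {H : SimpleGraph (Fin (m + 1))}
    {K : SimpleGraph (Fin m)} (hH : H.comap Fin.castSucc = K) (e : K ↪g G) {u : V}
    (hu : u ∉ Set.range e) (hadj : ∀ i, H.Adj (Fin.last m) i.castSucc ↔ G.Adj u (e i)) :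
    Nonempty (H ↪g G) := by
  subst hH
  let f : Fin (m + 1) → V := Fin.lastCases u e
  have hf : f.Injective := by
    intro i j
    induction i using Fin.lastCases <;> induction j using Fin.lastCases <;>
      simp only [f, Fin.lastCases_last, Fin.lastCases_castSucc, e.injective.eq_iff,
        Fin.castSucc_inj, imp_self, Fin.castSucc_ne_last, imp_false] <;> grind
  refine ⟨⟨⟨f, hf⟩, fun {i j} => ?_⟩⟩
  induction i using Fin.lastCases <;> induction j using Fin.lastCases <;>
    simp [f, hadj, H.adj_comm (Fin.castSucc _) (Fin.last m), G.adj_comm _ u]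

end SimpleGraph

open SimpleGraph

theorem comap_castSucc_fromEdgeSet_pathEdges_union {E : Set (Sym2 (Fin 5))}
    (hE : ∀ e ∈ E, 4 ∈ e) : (fromEdgeSet (pathEdges ∪ E)).comap Fin.castSucc = pathGraph 4 := by
  ext i j
  have hij : s(i.castSucc, j.castSucc) ∉ E := fun h => by
    have := hE _ h
    fin_cases i <;> fin_cases j <;> simp at this
  fin_cases i <;> fin_cases j <;> simp_all [pathEdges, pathGraph_adj]

theorem Igraph1_adj_last (i : Fin 4) :
    Igraph1.Adj (Fin.last 4) i.castSucc ↔ i ∈ ({1} : Finset (Fin 4)) := by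
  fin_cases i <;> simp [Igraph1, pathEdges]

theorem Igraph2_adj_last (i : Fin 4) :
    Igraph2.Adj (Fin.last 4) i.castSucc ↔ i ∈ ({0, 1} : Finset (Fin 4)) := by
  fin_cases i <;> simp [Igraph2, pathEdges]

theorem Igraph3_adj_last (i : Fin 4) :
    Igraph3.Adj (Fin.last 4) i.castSucc ↔ i ∈ ({0, 2} : Finset (Fin 4)) := by
  fin_cases i <;> simp [Igraph3, pathEdges]

theorem Igraph4_adj_last (i : Fin 4) :
    Igraph4.Adj (Fin.last 4) i.castSucc ↔ i ∈ ({1, 2} : Finset (Fin 4)) := by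
  fin_cases i <;> simp [Igraph4, pathEdges]

theorem Igraph5_adj_last (i : Fin 4) :
    Igraph5.Adj (Fin.last 4) i.castSucc ↔ i ∈ ({0, 1, 2} : Finset (Fin 4)) := by
  fin_cases i <;> simp [Igraph5, pathEdges]

def HasInducedIgraph {V : Type*} (G : SimpleGraph V) : Prop :=
  Nonempty (Igraph1 ↪g G) ∨ Nonempty (Igraph2 ↪g G) ∨ Nonempty (Igraph3 ↪g G) ∨
    Nonempty (Igraph4 ↪g G) ∨ Nonempty (Igraph5 ↪g G)

/-- The neighbourhoods on the path `0123` of the last vertex of `P₅, I₁, …, I₅`. -/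
def attachmentPatterns : Finset (Finset (Fin 4)) :=
  {{3}, {1}, {0, 1}, {0, 2}, {1, 2}, {0, 1, 2}}

theorem mem_attachmentPatterns_or_image_rev_mem (S : Finset (Fin 4)) (hS : S.Nonempty)
    (h03 : ¬{0, 3} ⊆ S) : S ∈ attachmentPatterns ∨ S.image Fin.rev ∈ attachmentPatterns := by
  revert S
  decide

section Attach

variable {V : Type*} {G : SimpleGraph V} (e : pathGraph 4 ↪g G) {u : V}

theorem hasInducedIgraph_or_pathGraph_five_of_mem_attachmentPatterns (hu : u ∉ Set.range e)
    {S : Finset (Fin 4)} (hS : ∀ i, G.Adj u (e i) ↔ i ∈ S) (hpat : S ∈ attachmentPatterns) :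
    HasInducedIgraph G ∨ Nonempty (pathGraph 5 ↪g G) := by
  have extend {H : SimpleGraph (Fin 5)} (hH : H.comap Fin.castSucc = pathGraph 4)
      (hadj : ∀ i, H.Adj (Fin.last 4) i.castSucc ↔ i ∈ S) : Nonempty (H ↪g G) :=
    nonempty_embedding_of_comap_castSucc hH e hu fun i => (hadj i).trans (hS i).symm
  have extend_fromEdgeSet {E : Set (Sym2 (Fin 5))} (hE : ∀ e ∈ E, 4 ∈ e)
      (hadj : ∀ i, (fromEdgeSet (pathEdges ∪ E)).Adj (Fin.last 4) i.castSucc ↔ i ∈ S) :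
      Nonempty (fromEdgeSet (pathEdges ∪ E) ↪g G) :=
    extend (comap_castSucc_fromEdgeSet_pathEdges_union hE) hadj
  simp only [attachmentPatterns, Finset.mem_insert, Finset.mem_singleton] at hpat
  rcases hpat with rfl | rfl | rfl | rfl | rfl | rfl
  · exact .inr <| extend (pathGraph_comap_castSucc 4) fun i =>
      (pathGraph_adj_last_castSucc i).trans Finset.mem_singleton.symm
  · exact .inl <| .inl <| extend_fromEdgeSet (by simp) Igraph1_adj_last
  · exact .inl <| .inr <| .inl <| extend_fromEdgeSet (by simp) Igraph2_adj_last
  · exact .inl <| .inr <| .inr <| .inl <| extend_fromEdgeSet (by simp) Igraph3_adj_last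
  · exact .inl <| .inr <| .inr <| .inr <| .inl <| extend_fromEdgeSet (by simp) Igraph4_adj_last
  · exact .inl <| .inr <| .inr <| .inr <| .inr <| extend_fromEdgeSet (by simp) Igraph5_adj_last

theorem hasInducedIgraph_or_pathGraph_five_of_adj (hu : u ∉ Set.range e)
    (hd : 2 < G.dist (e 0) (e 3)) {i : Fin 4} (hi : G.Adj u (e i)) :
    HasInducedIgraph G ∨ Nonempty (pathGraph 5 ↪g G) := by
  classical
  set S := Finset.univ.filter fun i => G.Adj u (e i)
  have hS : ∀ i, G.Adj u (e i) ↔ i ∈ S := by simp [S]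
  have hends : ¬{0, 3} ⊆ S := fun h => by
    have h0 := (hS 0).2 (h (by simp))
    have h3 := (hS 3).2 (h (by simp))
    have : G.dist (e 0) (e 3) ≤ 2 := dist_le (.cons h0.symm (.cons h3 .nil))
    omega
  rcases mem_attachmentPatterns_or_image_rev_mem S ⟨i, (hS i).1 hi⟩ hends with hpat | hpat
  · exact hasInducedIgraph_or_pathGraph_five_of_mem_attachmentPatterns e hu hS hpat
  · refine hasInducedIgraph_or_pathGraph_five_of_mem_attachmentPatterns
      (e.comp (pathGraphRevIso 4).toEmbedding) (fun ⟨j, hj⟩ => hu ⟨_, hj⟩) (fun j => ?_) hpat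
    simp [hS, pathGraphRevIso, Fin.rev_eq_iff]

end Attach

/-- Let `G` be a connected `P₅`-free graph on `n ≥ 5` vertices with
diameter `3`. Then at least one of `I₁, …, I₅` is an induced subgraph of `G`. -/
theorem exists_induced_Igraph_of_P5_free_diam_three
    (n : ℕ) (hn : 5 ≤ n) (G : SimpleGraph (Fin n)) (hG : G.Connected)
    (hP5 : IsEmpty (SimpleGraph.pathGraph 5 ↪g G)) (hd : G.diam = 3) :
    Nonempty (Igraph1 ↪g G) ∨ Nonempty (Igraph2 ↪g G) ∨ Nonempty (Igraph3 ↪g G) ∨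
      Nonempty (Igraph4 ↪g G) ∨ Nonempty (Igraph5 ↪g G) := by
  have : Nonempty (Fin n) := ⟨⟨0, by omega⟩⟩
  obtain ⟨x, y, hxy⟩ := G.exists_dist_eq_diam
  obtain ⟨e, rfl, rfl⟩ := (hG x y).exists_pathGraph_embedding (hxy.trans hd)
  obtain ⟨u, hu, -, ⟨i, rfl⟩, hui⟩ := hG.exists_adj_of_ncard_lt (Set.range_nonempty e)
    (by simp only [Set.ncard_range_of_injective e.injective, Nat.card_fin]; omega)
  have hd' : G.dist (e 0) (e 3) = 3 := hxy.trans hd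
  exact (hasInducedIgraph_or_pathGraph_five_of_adj e hu (by omega) hui).resolve_right
    (not_nonempty_iff.2 hP5)
end

section
/- Let G be a connected P_5-free simple graph on n ≥ 5 vertices with diameter 3, and suppose that none of the graphs I_1, I_2, I_4, I_5 is an induced subgraph of G. Then G is isomorphic to J(a,b) for some positive integers a, b with a + b + 2 = n. -/
/-- The graph `J(a,b)`: obtained from the disjoint union of the stars `K_{1,a}` and
`K_{1,b}` (each realised as a complete bipartite graph with centre `Unit`) by joining
every pendant vertex of `K_{1,a}` with every pendant vertex of `K_{1,b}`. -/
def Jgraph (a b : ℕ) : SimpleGraph ((Unit ⊕ Fin a) ⊕ (Unit ⊕ Fin b)) where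
  Adj u v :=
    match u, v with
    | Sum.inl x, Sum.inl y => (completeBipartiteGraph Unit (Fin a)).Adj x y
    | Sum.inr x, Sum.inr y => (completeBipartiteGraph Unit (Fin b)).Adj x y
    | Sum.inl x, Sum.inr y => x.isRight ∧ y.isRight
    | Sum.inr x, Sum.inl y => x.isRight ∧ y.isRight
  symm := by
    constructor
    rintro (x | x) (y | y) h
    · exact (completeBipartiteGraph Unit (Fin a)).symm.symm _ _ h
    · exact ⟨h.2, h.1⟩
    · exact ⟨h.2, h.1⟩
    · exact (completeBipartiteGraph Unit (Fin b)).symm.symm _ _ h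
  loopless := by
    constructor
    rintro (x | x) h
    · exact (completeBipartiteGraph Unit (Fin a)).loopless.irrefl x h
    · exact (completeBipartiteGraph Unit (Fin b)).loopless.irrefl x h


/-!
Take vertices `a`, `d` at distance `3` and a shortest path `a b c d`; it is an induced `P₄`.
Excluding `P₅`, `I₂` and `I₅` forces every neighbour `w` of `a` to be adjacent to `c` and not to
`b`, so `a w c d` is again such a path. Applying this to all these paths (and their reversals)
shows that `N(a)` and `N(d)` are independent sets joined completely to each other. Excluding `I₁`
and `I₄` shows that no vertex outside `{a, d} ∪ N(a) ∪ N(d)` has a neighbour inside it, so by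
connectedness there is no such vertex. Hence `G` is the path `P₄` with its two inner vertices
blown up into the independent sets `N(a)` and `N(d)`, and so is `J(|N(a)|, |N(d)|)`.
-/

open SimpleGraph

namespace SimpleGraph

variable {V : Type*} {G : SimpleGraph V} {a b c d u v w x : V}

structure IsInducedP4 (G : SimpleGraph V) (a b c d : V) : Prop where
  adj_ab : G.Adj a b
  adj_bc : G.Adj b c
  adj_cd : G.Adj c d
  not_adj_ac : ¬G.Adj a c
  not_adj_ad : ¬G.Adj a d
  not_adj_bd : ¬G.Adj b d

theorem IsInducedP4.symm (h : G.IsInducedP4 a b c d) : G.IsInducedP4 d c b a :=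
  ⟨h.adj_cd.symm, h.adj_bc.symm, h.adj_ab.symm, fun h' => h.not_adj_bd h'.symm,
    fun h' => h.not_adj_ad h'.symm, fun h' => h.not_adj_ac h'.symm⟩

theorem not_adj_of_adj_of_two_lt_dist (h : 2 < G.dist u v) (hw : G.Adj u w) : ¬G.Adj w v :=
  fun hwv => by simpa using (G.dist_le (.cons hw (.cons hwv .nil))).trans_lt h

theorem exists_isInducedP4_of_dist_eq_three (h : G.dist a d = 3) :
    ∃ b c, G.IsInducedP4 a b c d := by
  have far : ∀ {w}, G.Adj a w → ¬G.Adj w d := not_adj_of_adj_of_two_lt_dist (by omega)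
  have had : ¬G.Adj a d := fun had => by simpa [h] using G.dist_le (.cons had .nil)
  obtain ⟨p, hp⟩ := exists_walk_of_dist_ne_zero (h.trans_ne (by norm_num))
  rw [h] at hp
  rcases p with _ | ⟨hab, _ | ⟨hbc, _ | ⟨hcd, _ | ⟨_, _⟩⟩⟩⟩ <;> simp at hp
  exact ⟨_, _, hab, hbc, hcd, fun hac => far hac hcd, had, far hab⟩

theorem Connected.mem_of_adj_mem (hG : G.Connected) {S : Set V} (hu : u ∈ S)
    (hS : ∀ x y, G.Adj x y → x ∈ S → y ∈ S) (v : V) : v ∈ S := by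
  by_contra hv
  obtain ⟨p⟩ := hG.preconnected u v
  obtain ⟨e, -, he, he'⟩ := p.exists_boundary_dart S hu hv
  exact he' (hS _ _ e.adj he)

def Embedding.ofAdjIffOfLT {W : Type*} [LinearOrder W] {H : SimpleGraph W} (f : W → V)
    (hf : f.Injective) (h : ∀ i j, i < j → (G.Adj (f i) (f j) ↔ H.Adj i j)) : H ↪g G where
  toFun := f
  inj' := hf
  map_rel_iff' {i j} := by
    rcases lt_trichotomy i j with hij | rfl | hij
    · exact h i j hij
    · simp
    · simpa [G.adj_comm, H.adj_comm] using h j i hij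

def layer (G : SimpleGraph V) [DecidableEq V] [DecidableRel G.Adj] (a d v : V) : Fin 4 :=
  if v = a then 0 else if G.Adj a v then 1 else if G.Adj d v then 2 else 3

section Layer

variable [DecidableEq V] [DecidableRel G.Adj]

theorem layer_eq_zero_iff : G.layer a d v = 0 ↔ v = a := by
  unfold layer; split_ifs <;> simp_all

theorem layer_eq_three_iff : G.layer a d v = 3 ↔ v ≠ a ∧ ¬G.Adj a v ∧ ¬G.Adj d v := by
  unfold layer; split_ifs <;> simp_all

theorem layer_of_adj_left (hv : G.Adj a v) : G.layer a d v = 1 := by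
  simp [layer, hv, hv.ne']

theorem layer_of_adj_right (hva : v ≠ a) (hav : ¬G.Adj a v) (hdv : G.Adj d v) :
    G.layer a d v = 2 := by
  simp [layer, hva, hav, hdv]

end Layer

namespace IsInducedP4

theorem last_ne_first (h : G.IsInducedP4 a b c d) : d ≠ a := by
  rintro rfl; exact h.not_adj_bd h.adj_ab.symm

theorem layer_last [DecidableEq V] [DecidableRel G.Adj] (h : G.IsInducedP4 a b c d) :
    G.layer a d d = 3 :=
  layer_eq_three_iff.2 ⟨h.last_ne_first, h.not_adj_ad, G.irrefl⟩

def pathGraphEmbedding (h : G.IsInducedP4 a b c d)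
    (hua : G.Adj u a) (hub : ¬G.Adj u b) (huc : ¬G.Adj u c) (hud : ¬G.Adj u d) :
    pathGraph 5 ↪g G := by
  obtain ⟨hab, hbc, hcd, hac, had, hbd⟩ := h
  refine Embedding.ofAdjIffOfLT ![u, a, b, c, d] ?_ ?_
  · intro i j hij
    fin_cases i <;> fin_cases j <;> simp at hij ⊢ <;> subst hij <;> simp_all [G.adj_comm]
  · intro i j hij
    fin_cases i <;> fin_cases j <;> simp_all [pathGraph_adj]

def igraph1Embedding (h : G.IsInducedP4 a b c d) (hua' : u ≠ a)
    (hua : ¬G.Adj u a) (hub : G.Adj u b) (huc : ¬G.Adj u c) (hud : ¬G.Adj u d) :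
    Igraph1 ↪g G := by
  obtain ⟨hab, hbc, hcd, hac, had, hbd⟩ := h
  refine Embedding.ofAdjIffOfLT ![a, b, c, d, u] ?_ ?_
  · intro i j hij
    fin_cases i <;> fin_cases j <;> simp at hij ⊢ <;> subst hij <;> simp_all [G.adj_comm]
  · intro i j hij
    fin_cases i <;> fin_cases j <;> simp_all [Igraph1, pathEdges, G.adj_comm _ u]

def igraph2Embedding (h : G.IsInducedP4 a b c d)
    (hua : G.Adj u a) (hub : G.Adj u b) (huc : ¬G.Adj u c) (hud : ¬G.Adj u d) :
    Igraph2 ↪g G := by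
  obtain ⟨hab, hbc, hcd, hac, had, hbd⟩ := h
  refine Embedding.ofAdjIffOfLT ![a, b, c, d, u] ?_ ?_
  · intro i j hij
    fin_cases i <;> fin_cases j <;> simp at hij ⊢ <;> subst hij <;> simp_all [G.adj_comm]
  · intro i j hij
    fin_cases i <;> fin_cases j <;> simp_all [Igraph2, pathEdges, G.adj_comm _ u]

def igraph4Embedding (h : G.IsInducedP4 a b c d)
    (hua : ¬G.Adj u a) (hub : G.Adj u b) (huc : G.Adj u c) (hud : ¬G.Adj u d) :
    Igraph4 ↪g G := by
  obtain ⟨hab, hbc, hcd, hac, had, hbd⟩ := h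
  refine Embedding.ofAdjIffOfLT ![a, b, c, d, u] ?_ ?_
  · intro i j hij
    fin_cases i <;> fin_cases j <;> simp at hij ⊢ <;> subst hij <;> simp_all [G.adj_comm]
  · intro i j hij
    fin_cases i <;> fin_cases j <;> simp_all [Igraph4, pathEdges, G.adj_comm _ u]

def igraph5Embedding (h : G.IsInducedP4 a b c d)
    (hua : G.Adj u a) (hub : G.Adj u b) (huc : G.Adj u c) (hud : ¬G.Adj u d) :
    Igraph5 ↪g G := by
  obtain ⟨hab, hbc, hcd, hac, had, hbd⟩ := h
  refine Embedding.ofAdjIffOfLT ![a, b, c, d, u] ?_ ?_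
  · intro i j hij
    fin_cases i <;> fin_cases j <;> simp at hij ⊢ <;> subst hij <;> simp_all [G.adj_comm]
  · intro i j hij
    fin_cases i <;> fin_cases j <;> simp_all [Igraph5, pathEdges, G.adj_comm _ u]

theorem adj_third_and_not_adj_second (hP5 : IsEmpty (pathGraph 5 ↪g G))
    (h2 : IsEmpty (Igraph2 ↪g G)) (h5 : IsEmpty (Igraph5 ↪g G)) (h : G.IsInducedP4 a b c d)
    (hua : G.Adj u a) (hud : ¬G.Adj u d) : G.Adj u c ∧ ¬G.Adj u b := by
  by_cases hub : G.Adj u b <;> by_cases huc : G.Adj u c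
  · exact h5.elim' (h.igraph5Embedding hua hub huc hud)
  · exact h2.elim' (h.igraph2Embedding hua hub huc hud)
  · exact ⟨huc, hub⟩
  · exact hP5.elim' (h.pathGraphEmbedding hua hub huc hud)

theorem not_adj_of_not_adj_ends (h1 : IsEmpty (Igraph1 ↪g G)) (h4 : IsEmpty (Igraph4 ↪g G))
    (h : G.IsInducedP4 a b c d) (hua' : u ≠ a) (hud' : u ≠ d) (hua : ¬G.Adj u a)
    (hud : ¬G.Adj u d) : ¬G.Adj u b ∧ ¬G.Adj u c := by
  by_cases hub : G.Adj u b <;> by_cases huc : G.Adj u c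
  · exact h4.elim' (h.igraph4Embedding hua hub huc hud)
  · exact h1.elim' (h.igraph1Embedding hua' hua hub huc hud)
  · exact h1.elim' (h.symm.igraph1Embedding hud' hud huc hub hua)
  · exact ⟨hub, huc⟩

section Diametral

variable (hP5 : IsEmpty (pathGraph 5 ↪g G)) (h2 : IsEmpty (Igraph2 ↪g G))
  (h5 : IsEmpty (Igraph5 ↪g G)) (h : G.IsInducedP4 a b c d) (had : 2 < G.dist a d)
include hP5 h2 h5 h had

theorem of_adj_first (hw : G.Adj a w) : G.IsInducedP4 a w c d :=
  have hwd := not_adj_of_adj_of_two_lt_dist had hw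
  ⟨hw, (h.adj_third_and_not_adj_second hP5 h2 h5 hw.symm hwd).1, h.adj_cd, h.not_adj_ac,
    h.not_adj_ad, hwd⟩

theorem not_adj_of_adj_first (hw : G.Adj a w) (hx : G.Adj a x) : ¬G.Adj w x := fun hwx =>
  ((h.of_adj_first hP5 h2 h5 had hw).adj_third_and_not_adj_second hP5 h2 h5 hx.symm
    (not_adj_of_adj_of_two_lt_dist had hx)).2 hwx.symm

theorem adj_of_adj_first_of_adj_last (hw : G.Adj a w) (hx : G.Adj d x) : G.Adj w x :=
  have hda : 2 < G.dist d a := G.dist_comm ▸ had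
  ((h.of_adj_first hP5 h2 h5 had hw).symm.adj_third_and_not_adj_second hP5 h2 h5 hx.symm
    (not_adj_of_adj_of_two_lt_dist hda hx)).1.symm

variable (h1 : IsEmpty (Igraph1 ↪g G)) (h4 : IsEmpty (Igraph4 ↪g G))
include h1 h4

theorem eq_or_adj_of_connected (hG : G.Connected) (v : V) :
    v = a ∨ v = d ∨ G.Adj a v ∨ G.Adj d v := by
  refine hG.mem_of_adj_mem (S := {v | v = a ∨ v = d ∨ G.Adj a v ∨ G.Adj d v}) (Or.inl rfl) ?_ v
  intro x y hxy hx
  by_contra hy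
  obtain ⟨hya, hyd, hay, hdy⟩ : y ≠ a ∧ y ≠ d ∧ ¬G.Adj a y ∧ ¬G.Adj d y := by simpa using hy
  rcases hx with rfl | rfl | hx | hx
  · exact hay hxy
  · exact hdy hxy
  · exact ((h.of_adj_first hP5 h2 h5 had hx).not_adj_of_not_adj_ends h1 h4 hya hyd
      (hay ·.symm) (hdy ·.symm)).1 hxy.symm
  · exact ((h.symm.of_adj_first hP5 h2 h5 (G.dist_comm ▸ had) hx).not_adj_of_not_adj_ends h1 h4
      hyd hya (hdy ·.symm) (hay ·.symm)).1 hxy.symm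

theorem eq_comap_layer [DecidableEq V] [DecidableRel G.Adj] (hG : G.Connected) :
    G = (pathGraph 4).comap (G.layer a d) := by
  have hda : 2 < G.dist d a := G.dist_comm ▸ had
  have hfar : ∀ {w}, G.Adj d w → ¬G.Adj a w := fun hdw haw =>
    not_adj_of_adj_of_two_lt_dist hda hdw haw.symm
  have hla : G.layer a d a = 0 := layer_eq_zero_iff.2 rfl
  have hlA : ∀ {v}, G.Adj a v → G.layer a d v = 1 := layer_of_adj_left
  have hlB : ∀ {v}, G.Adj d v → G.layer a d v = 2 := fun hdv =>
    layer_of_adj_right (by rintro rfl; exact h.not_adj_ad hdv.symm) (hfar hdv) hdv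
  have hA : ∀ {v w}, G.Adj a v → G.Adj a w → ¬G.Adj v w := h.not_adj_of_adj_first hP5 h2 h5 had
  have hB : ∀ {v w}, G.Adj d v → G.Adj d w → ¬G.Adj v w :=
    h.symm.not_adj_of_adj_first hP5 h2 h5 hda
  have hAB : ∀ {v w}, G.Adj a v → G.Adj d w → G.Adj v w :=
    h.adj_of_adj_first_of_adj_last hP5 h2 h5 had
  have hcover := h.eq_or_adj_of_connected hP5 h2 h5 had h1 h4 hG
  ext x y
  rcases hcover x with hx | hx | hx | hx <;> rcases hcover y with hy | hy | hy | hy <;>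
    simp [pathGraph_adj, hx, hy, hla, h.layer_last, hlA, hlB, h.not_adj_ad] <;>
    grind [SimpleGraph.adj_comm]

end Diametral

end IsInducedP4

theorem nonempty_comap_iso_comap {V W ι : Type*} [Fintype V] [Fintype W] [DecidableEq ι]
    (K : SimpleGraph ι) {f : V → ι} {g : W → ι}
    (h : ∀ i, Fintype.card {v // f v = i} = Fintype.card {w // g w = i}) :
    Nonempty (K.comap f ≃g K.comap g) :=
  ⟨⟨Equiv.ofFiberEquiv fun i => Fintype.equivOfCardEq (h i),
    by simp only [comap_adj, Equiv.ofFiberEquiv_map, implies_true]⟩⟩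

end SimpleGraph

namespace Jgraph

variable (a b : ℕ)

def part : (Unit ⊕ Fin a) ⊕ (Unit ⊕ Fin b) → Fin 4 :=
  Sum.elim (Sum.elim (fun _ => 0) (fun _ => 1)) (Sum.elim (fun _ => 3) (fun _ => 2))

theorem eq_comap_part : Jgraph a b = (pathGraph 4).comap (part a b) := by
  ext ((_ | _) | (_ | _)) ((_ | _) | (_ | _)) <;> simp [Jgraph, part, pathGraph_adj]

theorem card_part_fiber (i : Fin 4) :
    Fintype.card {w // part a b w = i} = ![1, a, b, 1] i := by
  rw [Fintype.card_subtype, Finset.card_filter]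
  fin_cases i <;> simp [part, Fintype.sum_sum_type]

end Jgraph

theorem exists_iso_Jgraph_of_comap_pathGraph {V : Type*} [Fintype V] (f : V → Fin 4)
    (h0 : ∃! v, f v = 0) (h1 : ∃ v, f v = 1) (h2 : ∃ v, f v = 2) (h3 : ∃! v, f v = 3) :
    ∃ a b, 0 < a ∧ 0 < b ∧ a + b + 2 = Fintype.card V ∧
      Nonempty ((pathGraph 4).comap f ≃g Jgraph a b) := by
  have card_eq_one {i : Fin 4} (hi : ∃! v, f v = i) : Fintype.card {v // f v = i} = 1 :=
    let ⟨v, hv, huniq⟩ := hi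
    Fintype.card_eq_one_iff.2 ⟨⟨v, hv⟩, fun w => Subtype.ext (huniq w w.2)⟩
  set a := Fintype.card {v // f v = 1}
  set b := Fintype.card {v // f v = 2}
  have hfib (i : Fin 4) :
      Fintype.card {v // f v = i} = Fintype.card {w // Jgraph.part a b w = i} := by
    rw [Jgraph.card_part_fiber]
    fin_cases i
    exacts [card_eq_one h0, rfl, rfl, card_eq_one h3]
  obtain ⟨e⟩ := nonempty_comap_iso_comap (pathGraph 4) hfib
  refine ⟨a, b, Fintype.card_pos_iff.2 (nonempty_subtype.2 h1),
    Fintype.card_pos_iff.2 (nonempty_subtype.2 h2), ?_, ⟨Jgraph.eq_comap_part a b ▸ e⟩⟩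
  rw [Fintype.card_congr e.toEquiv]
  simp
  omega

namespace SimpleGraph.IsInducedP4

variable {V : Type*} [Fintype V] {G : SimpleGraph V} {a b c d : V}

theorem exists_iso_Jgraph (hP5 : IsEmpty (pathGraph 5 ↪g G)) (h2 : IsEmpty (Igraph2 ↪g G))
    (h5 : IsEmpty (Igraph5 ↪g G)) (h : G.IsInducedP4 a b c d) (had : 2 < G.dist a d)
    (h1 : IsEmpty (Igraph1 ↪g G)) (h4 : IsEmpty (Igraph4 ↪g G)) (hG : G.Connected) :
    ∃ k l, 0 < k ∧ 0 < l ∧ k + l + 2 = Fintype.card V ∧ Nonempty (G ≃g Jgraph k l) := by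
  classical
  have hcover := h.eq_or_adj_of_connected hP5 h2 h5 had h1 h4 hG
  have hc : c ≠ a := by rintro rfl; exact h.not_adj_ad h.adj_cd
  rw [h.eq_comap_layer hP5 h2 h5 had h1 h4 hG]
  refine exists_iso_Jgraph_of_comap_pathGraph _ ⟨a, layer_eq_zero_iff.2 rfl,
    fun v => layer_eq_zero_iff.1⟩ ⟨b, layer_of_adj_left h.adj_ab⟩
    ⟨c, layer_of_adj_right hc h.not_adj_ac h.adj_cd.symm⟩ ⟨d, h.layer_last, fun v hv => ?_⟩
  have := layer_eq_three_iff.1 hv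
  have := hcover v
  tauto

end SimpleGraph.IsInducedP4

theorem iso_Jgraph_of_P5_free_diam_three_general
    (n : ℕ) (G : SimpleGraph (Fin n)) (hG : G.Connected)
    (hP5 : IsEmpty (SimpleGraph.pathGraph 5 ↪g G)) (hd : G.diam = 3)
    (h1 : IsEmpty (Igraph1 ↪g G)) (h2 : IsEmpty (Igraph2 ↪g G))
    (h4 : IsEmpty (Igraph4 ↪g G)) (h5 : IsEmpty (Igraph5 ↪g G)) :
    ∃ a b : ℕ, 0 < a ∧ 0 < b ∧ a + b + 2 = n ∧ Nonempty (G ≃g Jgraph a b) := by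
  have := hG.nonempty
  obtain ⟨u, v, huv⟩ := G.exists_dist_eq_diam
  obtain ⟨b, c, hP⟩ := exists_isInducedP4_of_dist_eq_three (huv.trans hd)
  simpa using hP.exists_iso_Jgraph hP5 h2 h5 (by omega) h1 h4 hG

/-- Let `G` be a connected `P₅`-free graph on `n ≥ 5` vertices with
diameter `3`, such that none of `I₁, I₂, I₄, I₅` is an induced subgraph of `G`. Then `G` is
isomorphic to `J(a,b)` for some positive integers `a, b` with `a + b + 2 = n`. -/
theorem iso_Jgraph_of_P5_free_diam_three
    (n : ℕ) (hn : 5 ≤ n) (G : SimpleGraph (Fin n)) (hG : G.Connected)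
    (hP5 : IsEmpty (SimpleGraph.pathGraph 5 ↪g G)) (hd : G.diam = 3)
    (h1 : IsEmpty (Igraph1 ↪g G)) (h2 : IsEmpty (Igraph2 ↪g G))
    (h4 : IsEmpty (Igraph4 ↪g G)) (h5 : IsEmpty (Igraph5 ↪g G)) :
    ∃ a b : ℕ, 0 < a ∧ 0 < b ∧ a + b + 2 = n ∧ Nonempty (G ≃g Jgraph a b) :=
  iso_Jgraph_of_P5_free_diam_three_general n G hG hP5 hd h1 h2 h4 h5
end

section
/- For an integer n ≥ 6, the distance Laplacian spectrum of K_2 ∇ (n−2)K_1 is {(2n−2) with multiplicity n−3, n with multiplicity 2, 0}; for odd n ≥ 6 the distance Laplacian spectrum of K_1 ∇ K_{(n−1)/2,(n−1)/2} is {((3n−1)/2) with multiplicity n−3, n with multiplicity 2, 0}; and for n ≥ 6 divisible by 3 the distance Laplacian spectrum of K_{n/3,n/3,n/3} is {(4n/3) with multiplicity n−3, n with multiplicity 2, 0}. -/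
open Matrix

/-- The join `G ∇ H` of two graphs: disjoint union together with all edges between them. -/
def graphJoin {α β : Type*} (G : SimpleGraph α) (H : SimpleGraph β) :
    SimpleGraph (α ⊕ β) where
  Adj x y :=
    match x, y with
    | Sum.inl a, Sum.inl b => G.Adj a b
    | Sum.inr a, Sum.inr b => H.Adj a b
    | Sum.inl _, Sum.inr _ => True
    | Sum.inr _, Sum.inl _ => True
  symm := by
    constructor
    rintro (a | a) (b | b) h
    · exact G.symm.symm _ _ h
    · trivial
    · trivial
    · exact H.symm.symm _ _ h
  loopless := by
    constructor
    rintro (a | a) h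
    · exact G.loopless.irrefl a h
    · exact H.loopless.irrefl a h

/-!
All three graphs are complete tripartite: `K_{1,1,n-2}`, `K_{1,m,m}` with `n = 2m + 1`, and
`K_{k,k,k}` with `n = 3k`; in each, every part has size `1` or a common size `s`.
In a complete multipartite graph on `n` vertices two vertices are at distance `1` if they lie in
different parts and `2` if they lie in the same part, so `D^L = diag(n + n_i) - J - B`, where `n_i`
is the size of the part of the vertex, `J` is the all-ones matrix and `B` the block matrix of the
parts. An eigenvector whose eigenvalue is not `n + n_i` for a part with `n_i ≥ 2` is constant on
every part, and then the eigenvalue is `0` or `n`. Hence the spectrum lies in `{0, n, n + s}`, and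
the multiplicities are forced by the traces of `D^L` and of `(D^L)²`.
-/

open Finset

theorem Matrix.IsHermitian.trace_mul_self_eq_sum_sq_roots_charpoly {n 𝕜 : Type*} [RCLike 𝕜]
    [Fintype n] [DecidableEq n] {A : Matrix n n 𝕜} (hA : A.IsHermitian) :
    (A * A).trace = (A.charpoly.roots.map (· ^ 2)).sum := by
  rw [hA.roots_charpoly_eq_eigenvalues, Multiset.map_map]
  conv_lhs => rw [hA.spectral_theorem, ← map_mul, Unitary.conjStarAlgAut_apply, trace_mul_cycle,
    Unitary.coe_star_mul_self, one_mul, diagonal_mul_diagonal, trace_diagonal]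
  simp [sq]

theorem Multiset.eq_replicate_of_sum_of_sum_sq {K : Type*} [Field K] [CharZero K]
    {R : Multiset K} {a b : K} {p q : ℕ} (ha : a ≠ 0) (hb : b ≠ 0) (hab : a ≠ b)
    (hR : ∀ x ∈ R, x = 0 ∨ x = a ∨ x = b)
    (h₁ : R.sum = p * a + q * b) (h₂ : (R.map (· ^ 2)).sum = p * a ^ 2 + q * b ^ 2) :
    R = replicate p a + replicate q b + replicate (card R - p - q) 0 := by
  classical
  have hdecomp :
      R = replicate (count a R) a + replicate (count b R) b + replicate (count 0 R) 0 := by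
    ext x
    simp only [count_add, count_replicate]
    by_cases hx : x ∈ R
    · rcases hR x hx with rfl | rfl | rfl <;> simp [ha, hb, hab, ha.symm, hb.symm, hab.symm]
    · split_ifs <;> simp_all
  rw [hdecomp] at h₁ h₂ ⊢
  simp only [sum_add, map_add, map_replicate, sum_replicate, nsmul_eq_mul, mul_zero, add_zero,
    card_add, card_replicate] at h₁ h₂ ⊢
  have hp : (count a R : K) = p := by
    have : ((count a R : K) - p) * a * (b - a) = 0 := by linear_combination b * h₁ - h₂
    simpa [ha, sub_ne_zero.mpr hab.symm, sub_eq_zero] using this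
  have hq : (count b R : K) = q := by
    have : ((count b R : K) - q) * b = 0 := by linear_combination h₁ - a * hp
    simpa [hb, sub_eq_zero] using this
  norm_cast at hp hq
  rw [hp, hq]
  congr 2
  omega

theorem isHermitian_distLaplacian {V : Type*} [Fintype V] [DecidableEq V] (G : SimpleGraph V) :
    (distLaplacian G).IsHermitian := by
  ext u v
  by_cases h : u = v
  · simp [distLaplacian, h]
  · simp [distLaplacian, h, Ne.symm h, SimpleGraph.dist_comm]

/-- A map `π : V → ι` is read as a partition of `V` into the fibres of `π`;
`(⊤ : SimpleGraph ι).comap π` is then the complete multipartite graph with these parts. -/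
def partSize {V ι : Type*} [Fintype V] [DecidableEq ι] (π : V → ι) (i : ι) : ℕ :=
  #{v | π v = i}

section PartSize

variable {ι V : Type*} [Fintype V] [DecidableEq ι]

theorem sum_comp_eq_sum_partSize_mul [Fintype ι] {R : Type*} [NonAssocSemiring R] (π : V → ι)
    (f : ι → R) : ∑ v, f (π v) = ∑ i, partSize π i * f i := by
  rw [← Finset.sum_fiberwise Finset.univ π]
  refine Finset.sum_congr rfl fun i _ => ?_
  rw [Finset.sum_congr rfl fun v hv => by rw [(Finset.mem_filter.mp hv).2], Finset.sum_const,
    nsmul_eq_mul, partSize]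

theorem sum_partSize [Fintype ι] (π : V → ι) : ∑ i, partSize π i = Fintype.card V := by
  simpa using (sum_comp_eq_sum_partSize_mul (R := ℕ) π fun _ => 1).symm

theorem sum_partSize_sub_one_mul_add [Fintype ι] [Nontrivial ι] {π : V → ι} (hπ : π.Surjective)
    (a b : ℝ) :
    ∑ i, (((partSize π i : ℝ) - 1) * a + (Fintype.card V - partSize π i) * b) =
      ((Fintype.card V - Fintype.card ι : ℕ) : ℝ) * a +
        ((Fintype.card ι - 1 : ℕ) : ℝ) * (Fintype.card V * b) := by
  have hc : ∑ i, (partSize π i : ℝ) = Fintype.card V := by rw [← Nat.cast_sum, sum_partSize]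
  simp only [Finset.sum_add_distrib, ← Finset.sum_mul, Finset.sum_sub_distrib, hc]
  push_cast [Fintype.card_le_of_surjective π hπ, Fintype.one_lt_card.le]
  simp only [Finset.sum_const, Finset.card_univ, nsmul_eq_mul, mul_one]
  ring

variable {α β γ δ : Type*} [Fintype α] [Fintype β] [DecidableEq γ] [DecidableEq δ]

theorem partSize_sumMap_inl (f : α → γ) (g : β → δ) (c : γ) :
    partSize (Sum.map f g) (.inl c) = partSize f c := by
  rw [partSize, partSize, Finset.card_filter, Finset.card_filter, Fintype.sum_sum_type]
  simp

theorem partSize_sumMap_inr (f : α → γ) (g : β → δ) (d : δ) :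
    partSize (Sum.map f g) (.inr d) = partSize g d := by
  rw [partSize, partSize, Finset.card_filter, Finset.card_filter, Fintype.sum_sum_type]
  simp

theorem partSize_id [DecidableEq α] (a : α) : partSize id a = 1 := by
  simp [partSize, Finset.filter_eq']

theorem partSize_const_unit (u : Unit) : partSize (fun _ : α => ()) u = Fintype.card α := by
  simp [partSize]

theorem partSize_sigma_fst [Fintype ι] (κ : ι → Type*) [∀ i, Fintype (κ i)] (i : ι) :
    partSize (Sigma.fst : (Σ i, κ i) → ι) i = Fintype.card (κ i) := by
  rw [partSize, Finset.card_filter, ← Finset.univ_sigma_univ, Finset.sum_sigma]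
  simp [apply_ite Finset.card]

end PartSize

theorem SimpleGraph.dist_comap_top {ι V : Type*} [DecidableEq V] [DecidableEq ι] [Nontrivial ι]
    {π : V → ι} (hπ : π.Surjective) (u v : V) :
    ((⊤ : SimpleGraph ι).comap π).dist u v =
      if u = v then 0 else if π u = π v then 2 else 1 := by
  set G := (⊤ : SimpleGraph ι).comap π
  split_ifs with huv hp
  · simp [huv]
  · obtain ⟨i, hi⟩ := exists_ne (π u)
    obtain ⟨w, rfl⟩ := hπ i
    have huw : G.Adj u w := by simpa [G] using hi.symm
    have hwv : G.Adj w v := by simpa [G, ← hp] using hi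
    have h₂ : G.dist u v ≤ 2 := by
      simpa using SimpleGraph.dist_le (huw.toWalk.append hwv.toWalk)
    have h₀ : G.dist u v ≠ 0 := SimpleGraph.dist_ne_zero_iff_ne_and_reachable.mpr
      ⟨huv, ⟨huw.toWalk.append hwv.toWalk⟩⟩
    have h₁ : G.dist u v ≠ 1 := by simp [SimpleGraph.dist_eq_one_iff_adj, G, hp]
    omega
  · exact SimpleGraph.dist_eq_one_iff_adj.mpr (by simpa [G] using hp)

section Spectrum

variable {ι V : Type*} [Fintype V] [DecidableEq V] [DecidableEq ι] [Nontrivial ι] {π : V → ι}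

theorem distLaplacian_comap_top_apply (hπ : π.Surjective) (u v : V) :
    distLaplacian ((⊤ : SimpleGraph ι).comap π) u v =
      (if u = v then (Fintype.card V + partSize π (π u) : ℝ) else 0) - 1 -
        if π u = π v then 1 else 0 := by
  have hdist (w : V) : (((⊤ : SimpleGraph ι).comap π).dist u w : ℝ) =
      1 + (if π u = π w then 1 else 0) - if u = w then 2 else 0 := by
    rw [SimpleGraph.dist_comap_top hπ]
    by_cases huw : u = w
    · norm_num [huw]
    · by_cases hp : π u = π w <;> norm_num [huw, hp]
  by_cases huv : u = v
  · subst huv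
    simp only [distLaplacian, Matrix.of_apply, hdist, Finset.sum_sub_distrib,
      Finset.sum_add_distrib, Finset.sum_boole, Finset.sum_ite_eq, if_true, Finset.mem_univ]
    simp only [Finset.sum_const, Finset.card_univ, nsmul_eq_mul, mul_one, partSize, eq_comm]
    ring
  · simp only [distLaplacian, Matrix.of_apply, huv, ↓reduceIte, hdist]
    ring

theorem distLaplacian_comap_top_mulVec (hπ : π.Surjective) (x : V → ℝ) (u : V) :
    (distLaplacian ((⊤ : SimpleGraph ι).comap π) *ᵥ x) u =
      (Fintype.card V + partSize π (π u)) * x u - ∑ v, x v - ∑ v with π v = π u, x v := by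
  simp only [mulVec, dotProduct, distLaplacian_comap_top_apply hπ, sub_mul, ite_mul, zero_mul,
    one_mul, Finset.sum_sub_distrib, Finset.sum_ite_eq, Finset.mem_univ, if_true, Finset.sum_filter]
  simp [eq_comm]

theorem distLaplacian_comap_top_eigenvalue_cases (hπ : π.Surjective) {μ : ℝ} {x : V → ℝ}
    (hx : x ≠ 0) (hμ : distLaplacian ((⊤ : SimpleGraph ι).comap π) *ᵥ x = μ • x) :
    μ = 0 ∨ μ = Fintype.card V ∨
      ∃ i, 2 ≤ partSize π i ∧ μ = (Fintype.card V : ℝ) + partSize π i := by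
  by_contra! hne
  obtain ⟨hμ0, hμn, hμc⟩ := hne
  set n : ℝ := (Fintype.card V : ℝ)
  have heq (u : V) : μ * x u =
      (n + partSize π (π u)) * x u - ∑ v, x v - ∑ v with π v = π u, x v := by
    rw [← distLaplacian_comap_top_mulVec hπ]
    simpa using (congrFun hμ u).symm
  have hconst (u w : V) (h : π w = π u) : x w = x u := by
    by_cases hc : 2 ≤ partSize π (π u)
    · have hu := heq u
      have hw := heq w
      rw [h] at hw
      have : (μ - (n + partSize π (π u))) * (x w - x u) = 0 := by linear_combination hw - hu
      simpa [sub_eq_zero, hμc _ hc] using this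
    · have hle : #{v | π v = π u} ≤ 1 := by rw [← partSize]; omega
      exact congrArg x (Finset.card_le_one.mp hle w (by simp [h]) u (by simp))
  have hflat (u : V) : (μ - n) * x u = -∑ v, x v := by
    have hpart : ∑ v with π v = π u, x v = partSize π (π u) * x u := by
      rw [Finset.sum_congr rfl fun v hv => hconst u v (Finset.mem_filter.mp hv).2,
        Finset.sum_const, nsmul_eq_mul, partSize]
    linear_combination heq u - hpart
  obtain ⟨u₀, hu₀⟩ := Function.ne_iff.mp hx
  have hall (u : V) : x u = x u₀ :=
    mul_left_cancel₀ (sub_ne_zero.mpr hμn) ((hflat u).trans (hflat u₀).symm)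
  have hsum : ∑ v, x v = n * x u₀ := by simp [hall, n]
  have : μ * x u₀ = 0 := by linear_combination hflat u₀ - hsum
  simp_all

theorem trace_distLaplacian_comap_top [Fintype ι] (hπ : π.Surjective) :
    (distLaplacian ((⊤ : SimpleGraph ι).comap π)).trace =
      ∑ i, (partSize π i : ℝ) * (Fintype.card V + partSize π i - 2) := by
  rw [← sum_comp_eq_sum_partSize_mul π fun i => (Fintype.card V + partSize π i - 2 : ℝ)]
  refine Finset.sum_congr rfl fun u _ => ?_
  simp only [Matrix.diag_apply, distLaplacian_comap_top_apply hπ, ↓reduceIte]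
  ring

theorem trace_distLaplacian_comap_top_mul_self [Fintype ι] (hπ : π.Surjective) :
    (distLaplacian ((⊤ : SimpleGraph ι).comap π) *
        distLaplacian ((⊤ : SimpleGraph ι).comap π)).trace =
      ∑ i, (partSize π i : ℝ) * (((Fintype.card V : ℝ) + partSize π i) ^ 2 -
        4 * (Fintype.card V + partSize π i) + Fintype.card V + 3 * partSize π i) := by
  set n : ℝ := (Fintype.card V : ℝ)
  rw [← sum_comp_eq_sum_partSize_mul π
    fun i => ((n + partSize π i) ^ 2 - 4 * (n + partSize π i) + n + 3 * partSize π i : ℝ)]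
  refine Finset.sum_congr rfl fun u _ => ?_
  have hsq (v : V) : distLaplacian ((⊤ : SimpleGraph ι).comap π) u v *
      distLaplacian ((⊤ : SimpleGraph ι).comap π) v u =
      (if u = v then (n + partSize π (π u)) ^ 2 - 4 * (n + partSize π (π u)) else 0) + 1 +
        if π u = π v then 3 else 0 := by
    rw [distLaplacian_comap_top_apply hπ, distLaplacian_comap_top_apply hπ]
    by_cases huv : u = v
    · subst huv
      simp only [↓reduceIte]
      ring
    · by_cases hp : π u = π v
      · norm_num [huv, Ne.symm huv, hp]
      · simp [huv, Ne.symm huv, hp, eq_comm]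
  simp only [Matrix.diag, Matrix.mul_apply, hsq, Finset.sum_add_distrib, Finset.sum_ite_eq,
    Finset.mem_univ, if_true]
  simp only [partSize, eq_comm, Finset.sum_const, Finset.card_univ, nsmul_eq_mul, mul_one,
    ← Finset.sum_filter]
  ring

theorem mem_roots_charpoly_distLaplacian_comap_top (hπ : π.Surjective) {s : ℕ}
    (hsize : ∀ i, partSize π i = 1 ∨ partSize π i = s) {x : ℝ}
    (hx : x ∈ (distLaplacian ((⊤ : SimpleGraph ι).comap π)).charpoly.roots) :
    x = 0 ∨ x = Fintype.card V + s ∨ x = Fintype.card V := by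
  have hA := isHermitian_distLaplacian ((⊤ : SimpleGraph ι).comap π)
  rw [hA.roots_charpoly_eq_eigenvalues] at hx
  obtain ⟨j, -, rfl⟩ := Multiset.mem_map.mp hx
  have hv : ⇑(hA.eigenvectorBasis j) ≠ 0 := fun h =>
    hA.eigenvectorBasis.orthonormal.ne_zero j (by ext; simpa using congrFun h _)
  rcases distLaplacian_comap_top_eigenvalue_cases hπ hv (hA.mulVec_eigenvectorBasis j) with
    h | h | ⟨i, hi, h⟩
  · exact .inl h
  · exact .inr (.inr h)
  · obtain hi' | hi' := hsize i
    · omega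
    · exact .inr (.inl (by simpa [hi'] using h))

/-! Since every part size `c` satisfies `(c - 1) (c - s) = 0`, both traces below reduce to sums
of the form `∑ i, ((c_i - 1) a + (n - c_i) b)`. -/

theorem sum_roots_charpoly_distLaplacian_comap_top [Fintype ι] (hπ : π.Surjective) {s : ℕ}
    (hsize : ∀ i, partSize π i = 1 ∨ partSize π i = s) :
    (distLaplacian ((⊤ : SimpleGraph ι).comap π)).charpoly.roots.sum =
      ((Fintype.card V - Fintype.card ι : ℕ) : ℝ) * (Fintype.card V + s) +
        ((Fintype.card ι - 1 : ℕ) : ℝ) * Fintype.card V := by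
  rw [← trace_eq_sum_roots_charpoly_of_splits (isHermitian_distLaplacian _).splits_charpoly,
    trace_distLaplacian_comap_top hπ, ← mul_one (Fintype.card V : ℝ),
    ← sum_partSize_sub_one_mul_add hπ]
  refine Finset.sum_congr rfl fun i _ => ?_
  have hfac : ((partSize π i : ℝ) - 1) * (partSize π i - s) = 0 := by
    rcases hsize i with h | h <;> simp [h]
  linear_combination hfac

theorem sum_sq_roots_charpoly_distLaplacian_comap_top [Fintype ι] (hπ : π.Surjective) {s : ℕ}
    (hsize : ∀ i, partSize π i = 1 ∨ partSize π i = s) :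
    ((distLaplacian ((⊤ : SimpleGraph ι).comap π)).charpoly.roots.map (· ^ 2)).sum =
      ((Fintype.card V - Fintype.card ι : ℕ) : ℝ) * (Fintype.card V + s) ^ 2 +
        ((Fintype.card ι - 1 : ℕ) : ℝ) * Fintype.card V ^ 2 := by
  rw [← (isHermitian_distLaplacian _).trace_mul_self_eq_sum_sq_roots_charpoly,
    trace_distLaplacian_comap_top_mul_self hπ, sq (Fintype.card V : ℝ),
    ← sum_partSize_sub_one_mul_add hπ]
  refine Finset.sum_congr rfl fun i _ => ?_
  have hfac : ((partSize π i : ℝ) - 1) * (partSize π i - s) = 0 := by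
    rcases hsize i with h | h <;> simp [h]
  linear_combination (partSize π i + 2 * (Fintype.card V : ℝ) + s) * hfac

theorem roots_charpoly_distLaplacian_comap_top [Fintype ι] (hπ : π.Surjective) {s : ℕ}
    (hs : 0 < s) (hsize : ∀ i, partSize π i = 1 ∨ partSize π i = s) :
    (distLaplacian ((⊤ : SimpleGraph ι).comap π)).charpoly.roots =
      Multiset.replicate (Fintype.card V - Fintype.card ι) ((Fintype.card V : ℝ) + s) +
        Multiset.replicate (Fintype.card ι - 1) (Fintype.card V : ℝ) + {0} := by
  have hk : 1 < Fintype.card ι := Fintype.one_lt_card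
  have hkn : Fintype.card ι ≤ Fintype.card V := Fintype.card_le_of_surjective π hπ
  have hn : (0 : ℝ) < Fintype.card V := Nat.cast_pos.mpr (by omega)
  have hcard : Multiset.card (distLaplacian ((⊤ : SimpleGraph ι).comap π)).charpoly.roots =
      Fintype.card V := by
    simp [(isHermitian_distLaplacian _).roots_charpoly_eq_eigenvalues]
  refine (Multiset.eq_replicate_of_sum_of_sum_sq (by positivity) hn.ne' (by simpa using hs.ne')
    (fun x hx => mem_roots_charpoly_distLaplacian_comap_top hπ hsize hx)
    (sum_roots_charpoly_distLaplacian_comap_top hπ hsize)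
    (sum_sq_roots_charpoly_distLaplacian_comap_top hπ hsize)).trans ?_
  rw [hcard, show Fintype.card V - (Fintype.card V - Fintype.card ι) - (Fintype.card ι - 1) = 1 by
    omega, Multiset.replicate_one]

end Spectrum

theorem graphJoin_comap_top {α β γ δ : Type*} (f : α → γ) (g : β → δ) :
    graphJoin ((⊤ : SimpleGraph γ).comap f) ((⊤ : SimpleGraph δ).comap g) =
      (⊤ : SimpleGraph (γ ⊕ δ)).comap (Sum.map f g) := by
  ext (a | a) (b | b) <;> simp [graphJoin]

theorem SimpleGraph.bot_eq_comap_top_const (β : Type*) :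
    (⊥ : SimpleGraph β) = (⊤ : SimpleGraph Unit).comap fun _ => () := by
  ext; simp

theorem completeBipartiteGraph_eq_graphJoin (α β : Type*) :
    completeBipartiteGraph α β = graphJoin (⊥ : SimpleGraph α) (⊥ : SimpleGraph β) := by
  ext (a | a) (b | b) <;> simp [graphJoin]

theorem SimpleGraph.completeMultipartiteGraph_eq_comap_top {ι : Type*} (κ : ι → Type*) :
    completeMultipartiteGraph κ = (⊤ : SimpleGraph ι).comap Sigma.fst := by
  ext; simp [completeMultipartiteGraph]

theorem roots_charpoly_distLaplacian_top_join_bot (n : ℕ) (hn : 3 ≤ n) :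
    (distLaplacian (graphJoin (⊤ : SimpleGraph (Fin 2))
        (⊥ : SimpleGraph (Fin (n - 2))))).charpoly.roots =
      Multiset.replicate (n - 3) (2 * (n : ℝ) - 2) + Multiset.replicate 2 (n : ℝ) + {0} := by
  set π : Fin 2 ⊕ Fin (n - 2) → Fin 2 ⊕ Unit := Sum.map id fun _ => ()
  have hG : graphJoin (⊤ : SimpleGraph (Fin 2)) (⊥ : SimpleGraph (Fin (n - 2))) =
      (⊤ : SimpleGraph (Fin 2 ⊕ Unit)).comap π := by
    rw [← graphJoin_comap_top, SimpleGraph.comap_id, SimpleGraph.bot_eq_comap_top_const]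
  have hπ : π.Surjective := Function.surjective_id.sumMap fun _ => ⟨⟨0, by omega⟩, rfl⟩
  have hsize (i : Fin 2 ⊕ Unit) : partSize π i = 1 ∨ partSize π i = n - 2 := by
    rcases i with i | i
    · simp [π, partSize_sumMap_inl, partSize_id]
    · simp [π, partSize_sumMap_inr, partSize_const_unit]
  have : Nontrivial (Fin 2 ⊕ Unit) := ⟨⟨.inl 0, .inr (), Sum.inl_ne_inr⟩⟩
  have hV : Fintype.card (Fin 2 ⊕ Fin (n - 2)) = n := by
    simp only [Fintype.card_sum, Fintype.card_fin]
    omega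
  have hL : (n : ℝ) + (n - 2 : ℕ) = 2 * n - 2 := by
    push_cast [Nat.cast_sub (by omega : 2 ≤ n)]; ring
  rw [hG, roots_charpoly_distLaplacian_comap_top hπ (by omega) hsize, hV, hL]
  rfl

theorem roots_charpoly_distLaplacian_top_join_completeBipartite (n : ℕ) (hn : 3 ≤ n)
    (hodd : Odd n) :
    (distLaplacian (graphJoin (⊤ : SimpleGraph (Fin 1))
        (completeBipartiteGraph (Fin ((n - 1) / 2)) (Fin ((n - 1) / 2))))).charpoly.roots =
      Multiset.replicate (n - 3) ((3 * (n : ℝ) - 1) / 2) +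
        Multiset.replicate 2 (n : ℝ) + {0} := by
  obtain ⟨m, rfl⟩ := hodd
  set π : Fin 1 ⊕ (Fin m ⊕ Fin m) → Fin 1 ⊕ (Unit ⊕ Unit) :=
    Sum.map id (Sum.map (fun _ => ()) fun _ => ())
  have hG : graphJoin (⊤ : SimpleGraph (Fin 1)) (completeBipartiteGraph (Fin m) (Fin m)) =
      (⊤ : SimpleGraph (Fin 1 ⊕ (Unit ⊕ Unit))).comap π := by
    rw [← graphJoin_comap_top, ← graphJoin_comap_top, SimpleGraph.comap_id,
      ← SimpleGraph.bot_eq_comap_top_const, completeBipartiteGraph_eq_graphJoin]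
  have hπ : π.Surjective := Function.surjective_id.sumMap <|
    Function.Surjective.sumMap (fun _ => ⟨⟨0, by omega⟩, rfl⟩) fun _ => ⟨⟨0, by omega⟩, rfl⟩
  have hsize (i : Fin 1 ⊕ (Unit ⊕ Unit)) : partSize π i = 1 ∨ partSize π i = m := by
    rcases i with i | i | i <;>
      simp [π, partSize_sumMap_inl, partSize_sumMap_inr, partSize_id, partSize_const_unit]
  have : Nontrivial (Fin 1 ⊕ (Unit ⊕ Unit)) :=
    ⟨⟨.inl 0, .inr (.inl ()), Sum.inl_ne_inr⟩⟩
  have hV : Fintype.card (Fin 1 ⊕ (Fin m ⊕ Fin m)) = 2 * m + 1 := by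
    simp only [Fintype.card_sum, Fintype.card_fin]
    ring
  have hL : ((2 * m + 1 : ℕ) : ℝ) + m = (3 * (2 * m + 1 : ℕ) - 1) / 2 := by push_cast; ring
  rw [show (2 * m + 1 - 1) / 2 = m by omega, hG,
    roots_charpoly_distLaplacian_comap_top hπ (by omega) hsize, hV, hL]
  rfl

theorem roots_charpoly_distLaplacian_completeTripartite (n : ℕ) (hn : 0 < n) (hdvd : 3 ∣ n) :
    (distLaplacian (SimpleGraph.completeMultipartiteGraph
        (fun _ : Fin 3 => Fin (n / 3)))).charpoly.roots =
      Multiset.replicate (n - 3) (4 * (n : ℝ) / 3) + Multiset.replicate 2 (n : ℝ) + {0} := by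
  obtain ⟨k, rfl⟩ := hdvd
  have hV : Fintype.card (Σ _ : Fin 3, Fin k) = 3 * k := by simp
  have hL : ((3 * k : ℕ) : ℝ) + k = 4 * (3 * k : ℕ) / 3 := by push_cast; ring
  rw [show 3 * k / 3 = k by omega, SimpleGraph.completeMultipartiteGraph_eq_comap_top,
    roots_charpoly_distLaplacian_comap_top (s := k) (fun i => ⟨⟨i, ⟨0, by omega⟩⟩, rfl⟩)
      (by omega) fun i => .inr (by simp [partSize_sigma_fst]), hV, hL]
  rfl

/-- For `n ≥ 6`: the distance Laplacian spectrum of `K₂ ∇ (n-2)K₁` is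
`{(2n-2)^{n-3}, n², 0}`; for odd `n` the distance Laplacian spectrum of
`K₁ ∇ K_{(n-1)/2,(n-1)/2}` is `{((3n-1)/2)^{n-3}, n², 0}`; and for `3 ∣ n` the distance
Laplacian spectrum of `K_{n/3,n/3,n/3}` is `{(4n/3)^{n-3}, n², 0}`.  (Here `n²` means the
eigenvalue `n` with multiplicity `2`.) -/
theorem distLaplacian_spectra_of_H2_graphs (n : ℕ) (hn : 6 ≤ n) :
    (distLaplacian (graphJoin (⊤ : SimpleGraph (Fin 2))
        (⊥ : SimpleGraph (Fin (n - 2))))).charpoly.roots =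
      Multiset.replicate (n - 3) (2 * (n : ℝ) - 2) +
        Multiset.replicate 2 (n : ℝ) + {0} ∧
    (Odd n → (distLaplacian (graphJoin (⊤ : SimpleGraph (Fin 1))
        (completeBipartiteGraph (Fin ((n - 1) / 2)) (Fin ((n - 1) / 2))))).charpoly.roots =
      Multiset.replicate (n - 3) ((3 * (n : ℝ) - 1) / 2) +
        Multiset.replicate 2 (n : ℝ) + {0}) ∧
    (3 ∣ n → (distLaplacian (SimpleGraph.completeMultipartiteGraph
        (fun _ : Fin 3 => Fin (n / 3)))).charpoly.roots =
      Multiset.replicate (n - 3) (4 * (n : ℝ) / 3) +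
        Multiset.replicate 2 (n : ℝ) + {0}) :=
  ⟨roots_charpoly_distLaplacian_top_join_bot n (by omega),
    roots_charpoly_distLaplacian_top_join_completeBipartite n (by omega),
    roots_charpoly_distLaplacian_completeTripartite n (by omega)⟩
end

section
/- Let G be a connected simple graph on n vertices with diameter at most 2, and let μ_1 ≥ μ_2 ≥ ⋯ ≥ μ_{n−1} ≥ μ_n = 0 be the eigenvalues of its (ordinary) Laplacian matrix. Then the eigenvalues of the distance Laplacian matrix of G are 2n − μ_{n−1} ≥ 2n − μ_{n−2} ≥ ⋯ ≥ 2n − μ_1 and 0. Moreover, for each i ∈ {1,…,n−1}, the eigenspace of the Laplacian for μ_i equals the eigenspace of the distance Laplacian for 2n − μ_i. -/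
open Matrix

/-!
If the diameter is at most two, then `d(u, v) = 2 - A u v` for `u ≠ v`, so the distance Laplacian
is `2n • 1 - 2J - L`, where `J` is the all-ones matrix. An eigenvector of `L` for `μ ≠ 0` sums to
zero (the columns of `L` sum to zero), so `J` kills it and it is an eigenvector of `D^L` for
`2n - μ`; by connectedness the kernel of `L` consists of the constant vectors, which `D^L` kills.
Thus an orthonormal eigenbasis of `L` diagonalizes `D^L`, which gives the spectrum. Conversely an
eigenvector of `D^L` for `2n - μ ≠ 0` also sums to zero, hence is an eigenvector of `L` for `μ`;
here `μ ≠ 2n` because, by Gershgorin, Laplacian eigenvalues are at most twice the maximum degree.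
-/

open Polynomial Finset

theorem Multiset.map_eq_map_erase_add_of_count_eq_one {α β : Type*} [DecidableEq α]
    {s : Multiset α} {a : α} (hs : s.count a = 1) {f g : α → β} (hfg : ∀ x ≠ a, f x = g x) :
    s.map f = (s.erase a).map g + {f a} := by
  obtain ⟨t, rfl⟩ := Multiset.exists_cons_of_mem (Multiset.count_pos.mp (hs ▸ Nat.one_pos))
  have ha : a ∉ t := by simpa [Multiset.count_cons_self] using hs
  rw [Multiset.map_cons, Multiset.erase_cons_head,
    Multiset.map_congr rfl fun x hx => hfg x (ne_of_mem_of_not_mem hx ha), add_comm,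
    Multiset.singleton_add]

namespace Matrix

variable {ι K : Type*} [Fintype ι]

theorem roots_charpoly_eq_of_mulVec_basis [DecidableEq ι] [Field K] (M : Matrix ι ι K)
    (b : Module.Basis ι K (ι → K)) (f : ι → K) (hb : ∀ i, M *ᵥ b i = f i • b i) :
    M.charpoly.roots = univ.val.map f := by
  have hdiag : LinearMap.toMatrix b b M.toLin' = diagonal f := by
    ext i j
    by_cases hij : i = j
    · subst hij; simp [LinearMap.toMatrix_apply, hb]
    · simp [LinearMap.toMatrix_apply, hb, hij]
  rw [← M.charpoly_toLin', ← LinearMap.charpoly_toMatrix _ b, hdiag, charpoly_diagonal,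
    roots_prod _ _ (prod_ne_zero_iff.mpr fun i _ => X_sub_C_ne_zero (f i))]
  simp

theorem sum_eq_zero_of_mulVec_eq_smul [CommRing K] [NoZeroDivisors K] {M : Matrix ι ι K}
    (hM : 1 ᵥ* M = 0) {ν : K} (hν : ν ≠ 0) {x : ι → K} (hx : M *ᵥ x = ν • x) :
    ∑ i, x i = 0 := by
  have h : ν * ∑ i, x i = 0 := by
    calc ν * ∑ i, x i = 1 ⬝ᵥ (M *ᵥ x) := by simp [hx, dotProduct, Finset.mul_sum]
      _ = 0 := by rw [dotProduct_mulVec, hM, zero_dotProduct]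
  exact (mul_eq_zero.mp h).resolve_left hν

theorem IsHermitian.count_zero_roots_charpoly [DecidableEq ι] {𝕜 : Type*} [RCLike 𝕜]
    {A : Matrix ι ι 𝕜} (hA : A.IsHermitian) :
    A.charpoly.roots.count 0 = Module.finrank 𝕜 (LinearMap.ker A.toLin') := by
  have hrank : A.rank + Module.finrank 𝕜 (LinearMap.ker A.toLin') = Fintype.card ι := by
    rw [Matrix.rank, ← Matrix.toLin'_apply', LinearMap.finrank_range_add_finrank_ker,
      Module.finrank_fintype_fun_eq_card]
  rw [hA.rank_eq_card_non_zero_eigs, Fintype.card_subtype_compl] at hrank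
  rw [hA.roots_charpoly_eq_eigenvalues, Multiset.count_map]
  have hcard : (univ.val.filter fun i => (0 : 𝕜) = (RCLike.ofReal ∘ hA.eigenvalues) i).card
      = Fintype.card {i // hA.eigenvalues i = 0} := by
    simp [Fintype.card_subtype, ← Finset.filter_val, @eq_comm 𝕜 0]
  have := Fintype.card_subtype_le fun i => hA.eigenvalues i = 0
  rw [hcard]
  omega

end Matrix

namespace SimpleGraph

variable {V : Type*} [Fintype V] [DecidableEq V] (G : SimpleGraph V)

theorem distLaplacian_apply (u v : V) :
    distLaplacian G u v = (if u = v then ∑ k, (G.dist u k : ℝ) else 0) - G.dist u v := by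
  by_cases huv : u = v
  · subst huv; simp [distLaplacian]
  · simp [distLaplacian, huv]

theorem distLaplacian_mulVec_one : distLaplacian G *ᵥ 1 = 0 := by
  funext u
  simp [mulVec, dotProduct, distLaplacian_apply, Finset.sum_sub_distrib]

theorem one_vecMul_distLaplacian : 1 ᵥ* distLaplacian G = 0 := by
  funext v
  simp [vecMul, dotProduct, distLaplacian_apply, Finset.sum_sub_distrib, dist_comm]

variable [DecidableRel G.Adj]

theorem one_vecMul_lapMatrix {R : Type*} [CommRing R] : 1 ᵥ* G.lapMatrix R = 0 := by
  rw [← mulVec_transpose, (G.isSymm_lapMatrix (R := R)).eq]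
  exact G.lapMatrix_mulVec_const_eq_zero

theorem exists_le_two_mul_degree_of_hasEigenvalue_lapMatrix {μ : ℝ}
    (hμ : Module.End.HasEigenvalue (G.lapMatrix ℝ).mulVecLin μ) :
    ∃ v, μ ≤ 2 * G.degree v := by
  obtain ⟨v, hv⟩ := eigenvalue_mem_ball (A := G.lapMatrix ℝ) hμ
  have hdiag : G.lapMatrix ℝ v v = G.degree v := by simp [lapMatrix, degMatrix]
  have hrow : ∑ j ∈ univ.erase v, ‖G.lapMatrix ℝ v j‖ = G.degree v := by
    rw [G.degree_eq_sum_if_adj, ← Finset.sum_erase (s := univ) (a := v) (by simp)]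
    refine Finset.sum_congr rfl fun j hj => ?_
    simp [lapMatrix, degMatrix, (ne_of_mem_erase hj).symm, apply_ite]
  rw [Metric.mem_closedBall, hdiag, hrow, Real.dist_eq] at hv
  exact ⟨v, by linarith [le_abs_self (μ - G.degree v)]⟩

theorem lt_two_mul_card_of_hasEigenvalue_lapMatrix {μ : ℝ}
    (hμ : Module.End.HasEigenvalue (G.lapMatrix ℝ).mulVecLin μ) : μ < 2 * Fintype.card V := by
  obtain ⟨v, hv⟩ := G.exists_le_two_mul_degree_of_hasEigenvalue_lapMatrix hμ
  have : (G.degree v : ℝ) < Fintype.card V := by exact_mod_cast G.degree_lt_card_verts v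
  linarith

variable {G}

theorem Connected.count_zero_roots_charpoly_lapMatrix (hG : G.Connected) :
    (G.lapMatrix ℝ).charpoly.roots.count 0 = 1 := by
  have := hG.nonempty
  have := hG.preconnected.subsingleton_connectedComponent
  rw [(isHermitian_lapMatrix G (R := ℝ)).count_zero_roots_charpoly,
    ← card_connectedComponent_eq_finrank_ker_toLin'_lapMatrix, Fintype.card_eq_one_iff]
  exact ⟨G.connectedComponentMk (Classical.arbitrary V), fun c => Subsingleton.elim _ _⟩

theorem Connected.dist_eq_of_diam_le_two (hG : G.Connected) (hd : G.diam ≤ 2) (u v : V) :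
    (G.dist u v : ℝ) = 2 - G.adjMatrix ℝ u v - 2 * (1 : Matrix V V ℝ) u v := by
  have := hG.nonempty
  have hle : G.dist u v ≤ 2 := (G.dist_le_diam (G.connected_iff_ediam_ne_top.mp hG)).trans hd
  by_cases huv : u = v
  · subst huv; simp
  by_cases hadj : G.Adj u v
  · norm_num [dist_eq_one_iff_adj.mpr hadj, hadj, huv]
  · have h0 := hG.pos_dist_of_ne huv
    have h1 : G.dist u v ≠ 1 := fun h => hadj (dist_eq_one_iff_adj.mp h)
    simp [show G.dist u v = 2 by omega, hadj, huv]

theorem Connected.distLaplacian_eq_of_diam_le_two (hG : G.Connected) (hd : G.diam ≤ 2) :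
    distLaplacian G =
      (2 * Fintype.card V : ℝ) • 1 - 2 • Matrix.of (fun _ _ => 1) - G.lapMatrix ℝ := by
  have htr (u : V) : ∑ k, (G.dist u k : ℝ) = 2 * Fintype.card V - 2 - G.degree u := by
    simp [hG.dist_eq_of_diam_le_two hd, sum_sub_distrib, degree_eq_sum_if_adj, one_apply,
      mul_comm, sub_right_comm]
  ext u v
  by_cases huv : u = v
  · subst huv
    simp [distLaplacian, htr, lapMatrix, degMatrix]
  · rw [distLaplacian_apply, if_neg huv, hG.dist_eq_of_diam_le_two hd]
    simp [lapMatrix, degMatrix, huv, neg_add_eq_sub]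

theorem Connected.distLaplacian_mulVec_of_sum_eq_zero (hG : G.Connected) (hd : G.diam ≤ 2)
    {x : V → ℝ} (hx : ∑ i, x i = 0) :
    distLaplacian G *ᵥ x = (2 * Fintype.card V : ℝ) • x - G.lapMatrix ℝ *ᵥ x := by
  have hJ : (Matrix.of fun _ _ => (1 : ℝ) : Matrix V V ℝ) *ᵥ x = 0 := by
    funext i
    simp [mulVec, dotProduct, hx]
  rw [hG.distLaplacian_eq_of_diam_le_two hd, sub_mulVec, sub_mulVec, smul_mulVec, smul_mulVec,
    one_mulVec, hJ, smul_zero, sub_zero]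

theorem Connected.distLaplacian_mulVec_of_lapMatrix_mulVec_eq_smul (hG : G.Connected)
    (hd : G.diam ≤ 2) {μ : ℝ} {x : V → ℝ} (hx : G.lapMatrix ℝ *ᵥ x = μ • x) :
    distLaplacian G *ᵥ x = (if μ = 0 then 0 else 2 * Fintype.card V - μ) • x := by
  by_cases hμ : μ = 0
  · obtain ⟨v⟩ := hG.nonempty
    have hconst : x = x v • 1 := by
      rw [hμ, zero_smul, lapMatrix_mulVec_eq_zero_iff_forall_reachable] at hx
      funext u
      simpa using hx u v (hG.preconnected u v)
    rw [if_pos hμ, zero_smul, hconst, mulVec_smul, distLaplacian_mulVec_one, smul_zero]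
  · rw [if_neg hμ, hG.distLaplacian_mulVec_of_sum_eq_zero hd
      (sum_eq_zero_of_mulVec_eq_smul G.one_vecMul_lapMatrix hμ hx), hx, sub_smul]

theorem Connected.lapMatrix_mulVec_eq_smul_iff (hG : G.Connected) (hd : G.diam ≤ 2) {μ : ℝ}
    (h0 : μ ≠ 0) (h2n : μ ≠ 2 * Fintype.card V) {x : V → ℝ} :
    G.lapMatrix ℝ *ᵥ x = μ • x ↔ distLaplacian G *ᵥ x = (2 * Fintype.card V - μ) • x := by
  constructor
  · intro hx
    simpa [h0] using hG.distLaplacian_mulVec_of_lapMatrix_mulVec_eq_smul hd hx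
  · intro hx
    have hsum := sum_eq_zero_of_mulVec_eq_smul G.one_vecMul_distLaplacian
      (sub_ne_zero.mpr h2n.symm) hx
    rw [hG.distLaplacian_mulVec_of_sum_eq_zero hd hsum, sub_smul] at hx
    exact sub_right_inj.mp hx

theorem Connected.roots_charpoly_distLaplacian (hG : G.Connected) (hd : G.diam ≤ 2) :
    (distLaplacian G).charpoly.roots = (G.lapMatrix ℝ).charpoly.roots.map
      fun μ => if μ = 0 then 0 else 2 * (Fintype.card V : ℝ) - μ := by
  have hL := G.isHermitian_lapMatrix (R := ℝ)
  let b := hL.eigenvectorBasis.toBasis.map (WithLp.linearEquiv 2 ℝ (V → ℝ))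
  rw [roots_charpoly_eq_of_mulVec_basis _ b _ fun i =>
      hG.distLaplacian_mulVec_of_lapMatrix_mulVec_eq_smul hd (hL.mulVec_eigenvectorBasis i),
    hL.roots_charpoly_eq_eigenvalues, Multiset.map_map]
  rfl

end SimpleGraph

/-- Let `G` be a connected graph on `n` vertices with diameter at most 2,
with Laplacian eigenvalues `μ₁ ≥ ⋯ ≥ μ_{n-1} ≥ μ_n = 0`. Then the distance Laplacian
eigenvalues of `G` are `2n - μ_{n-1} ≥ ⋯ ≥ 2n - μ₁` together with `0` (stated as an equality
of multisets of eigenvalues, where one copy of the eigenvalue `0` of the Laplacian is removed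
and replaced by the eigenvalue `0` of the distance Laplacian); moreover, for each nonzero
Laplacian eigenvalue `μ`, the eigenspace of the Laplacian for `μ` equals the eigenspace of
the distance Laplacian for `2n - μ`. -/
theorem distLaplacian_spectrum_of_diam_le_two
    (n : ℕ) (G : SimpleGraph (Fin n)) [DecidableRel G.Adj] (hG : G.Connected)
    (hd : G.diam ≤ 2) :
    (distLaplacian G).charpoly.roots =
        (((G.lapMatrix ℝ).charpoly.roots.erase 0).map fun μ : ℝ => 2 * (n : ℝ) - μ) + {0} ∧
      ∀ μ : ℝ, μ ≠ 0 → Module.End.HasEigenvalue (G.lapMatrix ℝ).mulVecLin μ →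
        Module.End.eigenspace (G.lapMatrix ℝ).mulVecLin μ =
          Module.End.eigenspace (distLaplacian G).mulVecLin (2 * (n : ℝ) - μ) := by
  refine ⟨?_, fun μ h0 hμ => ?_⟩
  · rw [hG.roots_charpoly_distLaplacian hd, Multiset.map_eq_map_erase_add_of_count_eq_one
      hG.count_zero_roots_charpoly_lapMatrix fun μ hμ => if_neg hμ, if_pos rfl]
    simp only [Fintype.card_fin]
  · have h2n := (G.lt_two_mul_card_of_hasEigenvalue_lapMatrix hμ).ne
    ext x
    simpa only [Module.End.mem_eigenspace_iff, mulVecLin_apply, Fintype.card_fin] using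
      hG.lapMatrix_mulVec_eq_smul_iff hd h0 h2n
end
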